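/- arXiv:math/0702682 — 7 statements merged into one kernel-verified Lean document; each statement's English description precedes it below -/
import Mathlib

section
/- Let Z ~ N(0,1) and τ ≥ 1. Then Var[(Z^2 - τ)_+] ≤ (16 τ^{-1/2} - 9 τ^{-3/2} + 9 τ^{-5/2}) φ(τ^{1/2}), where φ is the standard normal density. -/
open MeasureTheory ProbabilityTheory Set Filter
open scoped NNReal ENNReal Topology



noncomputable def vtcP (τ z : ℝ) : ℝ :=
  z^3 + (3-2*τ)*z + (τ^2-2*τ+3) * z⁻¹ + (-τ^2+5*τ-9/2+9/(2*τ)) * (z^3)⁻¹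

noncomputable def vtcG (τ z : ℝ) : ℝ := vtcP τ z * Real.exp (-z^2/2)

noncomputable def vtcG' (τ z : ℝ) : ℝ :=
  (3*z^2 + (3-2*τ) - (τ^2-2*τ+3) * (z^2)⁻¹ - 3*(-τ^2+5*τ-9/2+9/(2*τ)) * (z^4)⁻¹
    - z * vtcP τ z) * Real.exp (-z^2/2)

lemma vtc_exp_deriv (z : ℝ) :
    HasDerivAt (fun z : ℝ => Real.exp (-z^2/2)) (-z * Real.exp (-z^2/2)) z := by
  have h := (((hasDerivAt_pow 2 z).neg.div_const 2).exp)
  refine h.congr_deriv ?_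
  push_cast [Pi.neg_apply]
  ring

lemma vtc_hasDerivAt (τ : ℝ) {z : ℝ} (hz : z ≠ 0) :
    HasDerivAt (vtcG τ) (vtcG' τ z) z := by
  have h1 : HasDerivAt (fun z : ℝ => z^3) ((3:ℕ) * z^(3-1)) z := hasDerivAt_pow 3 z
  have h2 : HasDerivAt (fun z : ℝ => (3-2*τ)*z) (3-2*τ) z := by
    simpa using (hasDerivAt_id z).const_mul (3-2*τ)
  have h3 : HasDerivAt (fun z : ℝ => (τ^2-2*τ+3) * z⁻¹) ((τ^2-2*τ+3) * (-(z^2)⁻¹)) z :=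
    (hasDerivAt_inv hz).const_mul _
  have h4 : HasDerivAt (fun z : ℝ => (-τ^2+5*τ-9/2+9/(2*τ)) * (z^3)⁻¹)
      ((-τ^2+5*τ-9/2+9/(2*τ)) * (-((3:ℕ) * z^(3-1)) / (z^3)^2)) z :=
    ((hasDerivAt_pow 3 z).inv (pow_ne_zero 3 hz)).const_mul _
  have hp : HasDerivAt (vtcP τ) (3*z^2 + (3-2*τ) - (τ^2-2*τ+3) * (z^2)⁻¹
      - 3*(-τ^2+5*τ-9/2+9/(2*τ)) * (z^4)⁻¹) z := by
    have h := ((h1.add h2).add h3).add h4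
    refine h.congr_deriv ?_
    push_cast
    field_simp
    ring
  have h := hp.mul (vtc_exp_deriv z)
  refine h.congr_deriv ?_
  unfold vtcG'
  ring

lemma vtc_tendsto (τ : ℝ) : Tendsto (vtcG τ) atTop (𝓝 0) := by
  set K : ℝ := 1 + |3-2*τ| + |τ^2-2*τ+3| + |-τ^2+5*τ-9/2+9/(2*τ)| with hK
  have hK0 : 0 ≤ K := by positivity
  apply squeeze_zero_norm' (a := fun z => K * (z^3 * Real.exp (-z)))
  · filter_upwards [eventually_ge_atTop (2:ℝ)] with z hz2
    have hz1 : (1:ℝ) ≤ z := by linarith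
    have hz0 : (0:ℝ) < z := by linarith
    have hexp : Real.exp (-z^2/2) ≤ Real.exp (-z) := by
      apply Real.exp_le_exp.2; nlinarith
    have hinv1 : z⁻¹ ≤ z^3 := by
      have h1 : z⁻¹ ≤ 1 := by
        rw [inv_le_one_iff₀]; right; exact hz1
      nlinarith
    have hinv3 : (z^3)⁻¹ ≤ z^3 := by
      have h1 : (z^3)⁻¹ ≤ 1 := by
        rw [inv_le_one_iff₀]; right; nlinarith
      nlinarith
    have hpb : |vtcP τ z| ≤ K * z^3 := by
      have t1 : |vtcP τ z| ≤ |z^3| + |(3-2*τ)*z| + |(τ^2-2*τ+3) * z⁻¹|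
          + |(-τ^2+5*τ-9/2+9/(2*τ)) * (z^3)⁻¹| := by
        unfold vtcP
        refine (abs_add_le _ _).trans ?_
        gcongr
        refine (abs_add_le _ _).trans ?_
        gcongr
        exact abs_add_le _ _
      have e1 : |z^3| = z^3 := abs_of_nonneg (by positivity)
      have e2 : |(3-2*τ)*z| ≤ |3-2*τ| * z^3 := by
        rw [abs_mul, abs_of_pos hz0]
        exact mul_le_mul_of_nonneg_left (by nlinarith) (abs_nonneg _)
      have e3 : |(τ^2-2*τ+3) * z⁻¹| ≤ |τ^2-2*τ+3| * z^3 := by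
        rw [abs_mul, abs_inv, abs_of_pos hz0]
        exact mul_le_mul_of_nonneg_left hinv1 (abs_nonneg _)
      have e4 : |(-τ^2+5*τ-9/2+9/(2*τ)) * (z^3)⁻¹| ≤ |-τ^2+5*τ-9/2+9/(2*τ)| * z^3 := by
        rw [abs_mul, abs_inv, abs_of_nonneg (by positivity : (0:ℝ) ≤ z^3)]
        exact mul_le_mul_of_nonneg_left hinv3 (abs_nonneg _)
      rw [hK]; nlinarith [t1]
    have : ‖vtcG τ z‖ = |vtcP τ z| * Real.exp (-z^2/2) := by
      rw [vtcG, Real.norm_eq_abs, abs_mul, abs_of_pos (Real.exp_pos _)]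
    rw [this]
    calc |vtcP τ z| * Real.exp (-z^2/2) ≤ (K * z^3) * Real.exp (-z) :=
          mul_le_mul hpb hexp (Real.exp_pos _).le (by positivity)
      _ = K * (z^3 * Real.exp (-z)) := by ring
  · simpa using (Real.tendsto_pow_mul_exp_neg_atTop_nhds_zero 3).const_mul K

lemma vtc_key (s : ℝ) (hs1 : 1 ≤ s) :
    IntegrableOn (fun z => (max (z^2 - s^2) 0)^2 * Real.exp (-z^2/2)) (Ioi s) ∧
    ∫ z in Ioi s, (max (z^2 - s^2) 0)^2 * Real.exp (-z^2/2)
      ≤ (8/s - 9/2/s^3 + 9/2/s^5) * Real.exp (-(s^2)/2) := by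
  set τ : ℝ := s^2 with hτdef
  have hτ : 1 ≤ τ := by nlinarith
  have hτ0 : 0 < τ := by linarith
  have hs0 : 0 < s := by linarith
  have hder : ∀ z ∈ Ici s, HasDerivAt (vtcG τ) (vtcG' τ z) z := fun z hz =>
    vtc_hasDerivAt τ (ne_of_gt (by have := mem_Ici.1 hz; linarith))
  have hdom : ∀ z ∈ Ioi s, (max (z^2 - τ) 0)^2 * Real.exp (-z^2/2) ≤ -vtcG' τ z := by
    intro z hz
    have hzs : s < z := hz
    have hz0 : (0:ℝ) < z := by linarith
    have hz2 : τ ≤ z^2 := by nlinarith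
    have hmax : max (z^2 - τ) 0 = z^2 - τ := max_eq_left (by linarith)
    rw [hmax, vtcG', ← neg_mul]
    apply mul_le_mul_of_nonneg_right _ (Real.exp_pos _).le
    rw [← sub_nonneg]
    have key : -(3*z^2 + (3-2*τ) - (τ^2-2*τ+3) * (z^2)⁻¹ - 3*(-τ^2+5*τ-9/2+9/(2*τ)) * (z^4)⁻¹
        - z * vtcP τ z) - (z^2-τ)^2
        = ((6*τ^2-3*τ+9)*z^2 + (-6*τ^3+30*τ^2-27*τ+27)) / (2*τ*z^4) := by
      unfold vtcP
      field_simp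
      ring
    rw [key]
    apply div_nonneg _ (by positivity)
    nlinarith [sq_nonneg τ, sq_nonneg (τ-1), mul_nonneg (by nlinarith : (0:ℝ) ≤ 6*τ^2-3*τ+9) (by linarith : (0:ℝ) ≤ z^2 - τ)]
  have hneg : ∀ z ∈ Ioi s, vtcG' τ z ≤ 0 := by
    intro z hz
    have h1 := hdom z hz
    have h2 : (0:ℝ) ≤ (max (z^2 - τ) 0)^2 * Real.exp (-z^2/2) := by positivity
    linarith
  have heq : ∫ z in Ioi s, vtcG' τ z = 0 - vtcG τ s :=
    integral_Ioi_of_hasDerivAt_of_nonpos' hder hneg (vtc_tendsto τ)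
  have hint : IntegrableOn (vtcG' τ) (Ioi s) :=
    integrableOn_Ioi_deriv_of_nonpos' hder hneg (vtc_tendsto τ)
  have hcont : Continuous (fun z : ℝ => (max (z^2 - τ) 0)^2 * Real.exp (-z^2/2)) := by
    fun_prop
  have hqint : IntegrableOn (fun z => (max (z^2 - τ) 0)^2 * Real.exp (-z^2/2)) (Ioi s) := by
    apply Integrable.mono' hint.neg (hcont.aestronglyMeasurable.restrict)
    refine (ae_restrict_iff' measurableSet_Ioi).2 (ae_of_all _ fun z hz => ?_)
    rw [Real.norm_eq_abs, abs_of_nonneg (by positivity)]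
    exact hdom z hz
  refine ⟨hqint, ?_⟩
  calc ∫ z in Ioi s, (max (z^2 - τ) 0)^2 * Real.exp (-z^2/2)
      ≤ ∫ z in Ioi s, -vtcG' τ z := setIntegral_mono_on hqint hint.neg measurableSet_Ioi hdom
    _ = vtcG τ s := by rw [integral_neg, heq]; ring
    _ = (8/s - 9/2/s^3 + 9/2/s^5) * Real.exp (-(s^2)/2) := by
        rw [vtcG]
        congr 1
        unfold vtcP
        rw [hτdef]
        field_simp
        ring


/-- Let Z ~ N(0,1) and τ ≥ 1. Then
Var[(Z² − τ)_+] ≤ (16 τ^{-1/2} − 9 τ^{-3/2} + 9 τ^{-5/2}) φ(τ^{1/2}),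
where φ is the standard normal density. -/
theorem variance_thresholded_chisq (τ : ℝ) (hτ : 1 ≤ τ) :
    variance (fun z => max (z ^ 2 - τ) 0) (gaussianReal 0 1)
      ≤ (16 * τ ^ (-(1 : ℝ)/2) - 9 * τ ^ (-(3 : ℝ)/2) + 9 * τ ^ (-(5 : ℝ)/2))
          * gaussianPDFReal 0 1 (Real.sqrt τ) := by
  have hτ0 : (0:ℝ) < τ := by linarith
  set s : ℝ := Real.sqrt τ with hsdef
  have hs2 : s^2 = τ := Real.sq_sqrt hτ0.le
  have hs0 : 0 < s := Real.sqrt_pos.2 hτ0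
  have hs1 : 1 ≤ s := by nlinarith
  -- rpow simplifications
  have hr : ∀ k : ℕ, τ ^ (-(k:ℝ)/2) = (s^k)⁻¹ := by
    intro k
    rw [← hs2, ← Real.rpow_natCast s 2, ← Real.rpow_mul hs0.le,
      show ((2:ℕ):ℝ) * (-(k:ℝ)/2) = -(k:ℝ) by push_cast; ring, Real.rpow_neg hs0.le, Real.rpow_natCast]
  have hr1 : τ ^ (-(1:ℝ)/2) = (s^1)⁻¹ := by simpa using hr 1
  have hr3 : τ ^ (-(3:ℝ)/2) = (s^3)⁻¹ := by simpa using hr 3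
  have hr5 : τ ^ (-(5:ℝ)/2) = (s^5)⁻¹ := by simpa using hr 5
  have hpdfs : gaussianPDFReal 0 1 s = (Real.sqrt (2*Real.pi))⁻¹ * Real.exp (-(s^2)/2) := by
    rw [gaussianPDFReal]
    norm_num
  have hXcont : Continuous (fun z : ℝ => max (z ^ 2 - τ) 0) := by fun_prop
  refine (variance_le_expectation_sq hXcont.aestronglyMeasurable).trans ?_
  rw [gaussianReal_of_var_ne_zero 0 one_ne_zero]
  have hpdf : gaussianPDF 0 1 = fun x => ((Real.toNNReal (gaussianPDFReal 0 1 x) : ℝ≥0) : ℝ≥0∞) := rfl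
  rw [hpdf, integral_withDensity_eq_integral_smul
    (f := fun x => Real.toNNReal (gaussianPDFReal 0 1 x)) ((measurable_gaussianPDFReal 0 1).real_toNNReal)]
  have hptw : (fun x => Real.toNNReal (gaussianPDFReal 0 1 x) • ((fun z : ℝ => max (z ^ 2 - τ) 0) ^ 2) x)
      = fun x => (Real.sqrt (2*Real.pi))⁻¹ * ((max (x^2 - τ) 0)^2 * Real.exp (-x^2/2)) := by
    funext x
    rw [Pi.pow_apply, NNReal.smul_def, Real.coe_toNNReal _ (gaussianPDFReal_nonneg 0 1 x),
      gaussianPDFReal]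
    norm_num
    ring
  rw [hptw, integral_const_mul]
  -- even function: whole line = 2 * Ioi 0
  have heven : ∫ x : ℝ, (max (x^2 - τ) 0)^2 * Real.exp (-x^2/2)
      = 2 * ∫ x in Ioi (0:ℝ), (max (x^2 - τ) 0)^2 * Real.exp (-x^2/2) := by
    rw [← integral_comp_abs (f := fun x => (max (x^2 - τ) 0)^2 * Real.exp (-x^2/2))]
    congr 1
    funext x
    rw [sq_abs]
  obtain ⟨hqint, hqle⟩ := vtc_key s hs1
  rw [hs2] at hqint hqle
  have hsplit : ∫ x in Ioi (0:ℝ), (max (x^2 - τ) 0)^2 * Real.exp (-x^2/2)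
      = ∫ x in Ioi s, (max (x^2 - τ) 0)^2 * Real.exp (-x^2/2) := by
    rw [← Ioc_union_Ioi_eq_Ioi hs0.le]
    have hz : ∀ x ∈ Ioc (0:ℝ) s, (max (x^2 - τ) 0)^2 * Real.exp (-x^2/2) = 0 := by
      intro x hx
      have : max (x^2 - τ) 0 = 0 := max_eq_right (by nlinarith [hx.1, hx.2])
      rw [this]
      ring
    have hint0 : IntegrableOn (fun x => (max (x^2 - τ) 0)^2 * Real.exp (-x^2/2)) (Ioc 0 s) := by
      rw [integrableOn_congr_fun hz measurableSet_Ioc]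
      exact integrableOn_zero
    rw [setIntegral_union (Ioc_disjoint_Ioi le_rfl) measurableSet_Ioi hint0 hqint,
      setIntegral_congr_fun measurableSet_Ioc hz]
    simp
  rw [heven, hsplit]
  have hstep : (Real.sqrt (2*Real.pi))⁻¹ *
      (2 * ∫ x in Ioi s, (max (x^2 - τ) 0)^2 * Real.exp (-x^2/2))
      ≤ (Real.sqrt (2*Real.pi))⁻¹ * (2 * ((8/s - 9/2/s^3 + 9/2/s^5) * Real.exp (-τ/2))) := by
    exact mul_le_mul_of_nonneg_left (mul_le_mul_of_nonneg_left hqle (by norm_num)) (by positivity)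
  refine hstep.trans (le_of_eq ?_)
  rw [hpdfs, hr1, hr3, hr5, hs2]
  field_simp
  ring
end

section
/- Let Z ~ N(0,1) and τ ≥ 1. Then E[(Z^2 - τ)_+] satisfies 0 < E[(Z^2 - τ)_+] ≤ (4 / √(2π)) τ^{-1/2} e^{-τ/2}. -/
open MeasureTheory ProbabilityTheory Real Set Filter
open scoped NNReal ENNReal

lemma hexp_int : Integrable (fun x : ℝ => Real.exp (-x^2/2)) := by
  have := integrable_exp_neg_mul_sq (b := (1:ℝ)/2) (by norm_num)
  refine this.congr ?_
  filter_upwards with x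
  ring_nf

lemma hsq_int : Integrable (fun x : ℝ => x^2 * Real.exp (-x^2/2)) := by
  have := integrable_rpow_mul_exp_neg_mul_sq (b := (1:ℝ)/2) (by norm_num) (s := 2) (by norm_num)
  refine this.congr ?_
  filter_upwards with x
  rw [show ((2:ℝ) = ((2:ℕ):ℝ)) by norm_num, Real.rpow_natCast]
  ring_nf

lemma texp : Tendsto (fun z : ℝ => Real.exp (-z^2/2)) atTop (nhds 0) := by
  have h2 : Tendsto (fun z : ℝ => z^2/2) atTop atTop :=
    (tendsto_pow_atTop two_ne_zero).atTop_div_const (by norm_num)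
  have h1 : Tendsto (fun z : ℝ => -z^2/2) atTop atBot := by
    simpa [neg_div] using tendsto_neg_atBot_iff.mpr h2
  exact Real.tendsto_exp_atBot.comp h1

lemma tmul : Tendsto (fun z : ℝ => z * Real.exp (-z^2/2)) atTop (nhds 0) := by
  have h := rpow_mul_exp_neg_mul_sq_isLittleO_exp_neg (b := (1:ℝ)/2) (by norm_num) 1
  have h2 : Tendsto (fun x : ℝ => Real.exp (-(1/2) * x)) atTop (nhds 0) := by
    apply Real.tendsto_exp_atBot.comp
    have := tendsto_id.const_mul_atTop (show (0:ℝ) < 1/2 by norm_num)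
    have h4 : Tendsto (fun x : ℝ => -((1/2) * x)) atTop atBot := tendsto_neg_atBot_iff.mpr this
    exact h4.congr fun x => by ring
  have h3 := h.isBigO.trans_tendsto h2
  refine h3.congr' ?_
  filter_upwards with x
  rw [Real.rpow_one]
  ring_nf

lemma tinvmul : Tendsto (fun z : ℝ => z⁻¹ * Real.exp (-z^2/2)) atTop (nhds 0) := by
  simpa using tendsto_inv_atTop_zero.mul texp

lemma J_bound (τ : ℝ) (hτ : 1 ≤ τ) :
    0 < ∫ z in Ioi (Real.sqrt τ), (z^2 - τ) * Real.exp (-z^2/2) ∧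
    ∫ z in Ioi (Real.sqrt τ), (z^2 - τ) * Real.exp (-z^2/2)
      ≤ 2 * (Real.sqrt τ)⁻¹ * Real.exp (-τ/2) := by
  have hτ0 : (0:ℝ) < τ := lt_of_lt_of_le one_pos hτ
  set c := Real.sqrt τ with hc
  have hc1 : 1 ≤ c := by
    rw [hc, show (1:ℝ) = Real.sqrt 1 by simp]
    exact Real.sqrt_le_sqrt hτ
  have hc0 : 0 < c := lt_of_lt_of_le one_pos hc1
  have hcsq : c^2 = τ := Real.sq_sqrt hτ0.le
  set a := τ * (1 - τ) / (τ + 1) with ha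
  have hτ1 : (0:ℝ) < τ + 1 := by linarith
  -- integrability of the integrand
  have hg1 : Integrable (fun z : ℝ => (z^2 - τ) * Real.exp (-z^2/2)) := by
    have : (fun z : ℝ => (z^2 - τ) * Real.exp (-z^2/2))
        = fun z => z^2 * Real.exp (-z^2/2) - τ * Real.exp (-z^2/2) := funext fun z => by ring
    rw [this]; exact hsq_int.sub (hexp_int.const_mul τ)
  constructor
  · -- positivity
    rw [setIntegral_pos_iff_support_of_nonneg_ae]
    · refine lt_of_lt_of_le ?_ (measure_mono (show Ioi c ⊆ Function.support _ ∩ Ioi c from ?_))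
      · rw [Real.volume_Ioi]; exact ENNReal.zero_lt_top
      · intro z hz
        have hz' : c < z := hz
        have h1 : τ < z^2 := by nlinarith
        refine ⟨?_, hz⟩
        simp only [Function.mem_support]
        exact ne_of_gt (mul_pos (by linarith) (Real.exp_pos _))
    · filter_upwards [ae_restrict_mem measurableSet_Ioi] with z hz
      have hz' : c < z := hz
      have h1 : τ < z^2 := by nlinarith
      exact mul_nonneg (by linarith) (Real.exp_pos _).le
    · exact hg1.integrableOn
  · -- upper bound via FTC
    set F : ℝ → ℝ := fun z => -(z + a * z⁻¹) * Real.exp (-z^2/2) with hF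
    set F' : ℝ → ℝ := fun z => (z^2 + a - 1 + a / z^2) * Real.exp (-z^2/2) with hF'
    have hderiv : ∀ z ∈ Ici c, HasDerivAt F (F' z) z := by
      intro z hz
      have hzc : c ≤ z := hz
      have hz0 : z ≠ 0 := ne_of_gt (lt_of_lt_of_le hc0 hzc)
      have d1 : HasDerivAt (fun z : ℝ => z + a * z⁻¹) (1 + a * (-(z^2)⁻¹)) z :=
        (hasDerivAt_id z).add ((hasDerivAt_inv hz0).const_mul a)
      have d0 : HasDerivAt (fun z : ℝ => -z^2/2) (-z) z := by
        have h := (hasDerivAt_pow 2 z).neg.div_const 2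
        convert h using 1
        · rfl
        · rfl
        · rfl
        push_cast
        ring
      have d2 : HasDerivAt (fun z : ℝ => Real.exp (-z^2/2)) (Real.exp (-z^2/2) * (-z)) z := d0.exp
      have := (d1.mul d2).neg
      convert this using 1
      · rfl
      · rfl
      · funext x; simp only [hF, Pi.neg_apply, Pi.mul_apply]; ring
      · simp only [hF']; field_simp; ring
    have hF'int : IntegrableOn F' (Ioi c) := by
      have hbd : Integrable (fun z : ℝ => z^2 * Real.exp (-z^2/2)
          + (|a-1| + |a|) * Real.exp (-z^2/2)) := hsq_int.add (hexp_int.const_mul _)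
      refine Integrable.mono' hbd.integrableOn ?_ ?_
      · refine (ContinuousOn.mul ?_ (Continuous.continuousOn (by fun_prop))).aestronglyMeasurable
          measurableSet_Ioi
        refine ContinuousOn.add (Continuous.continuousOn (by fun_prop)) ?_
        exact ContinuousOn.div continuousOn_const (Continuous.continuousOn (by fun_prop))
          fun z hz => pow_ne_zero 2 (ne_of_gt (lt_trans hc0 hz))
      · filter_upwards [ae_restrict_mem measurableSet_Ioi] with z hz
        have hzc : c < z := hz
        have hz1 : 1 ≤ z^2 := by nlinarith
        have hz0 : (0:ℝ) < z^2 := by linarith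
        rw [hF', Real.norm_eq_abs, abs_mul, abs_of_nonneg (Real.exp_pos _).le]
        have h2 : |a / z^2| ≤ |a| := by
          rw [abs_div, abs_of_pos hz0]
          exact div_le_self (abs_nonneg a) hz1
        have h3 : |z^2 + a - 1 + a/z^2| ≤ z^2 + (|a-1| + |a|) := by
          have := abs_add_le (z^2 + (a-1)) (a/z^2)
          have h4 := abs_add_le (z^2) (a-1)
          have h5 : |z^2| = z^2 := abs_of_pos hz0
          calc |z^2 + a - 1 + a/z^2| = |(z^2 + (a-1)) + a/z^2| := by ring_nf
            _ ≤ |z^2 + (a-1)| + |a/z^2| := abs_add_le _ _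
            _ ≤ (|z^2| + |a-1|) + |a| := add_le_add h4 h2
            _ = z^2 + (|a-1| + |a|) := by rw [h5]; ring
        calc |z^2 + a - 1 + a/z^2| * Real.exp (-z^2/2)
            ≤ (z^2 + (|a-1| + |a|)) * Real.exp (-z^2/2) :=
              mul_le_mul_of_nonneg_right h3 (Real.exp_pos _).le
          _ = z^2 * Real.exp (-z^2/2) + (|a-1| + |a|) * Real.exp (-z^2/2) := by ring
    have hFtend : Tendsto F atTop (nhds 0) := by
      have h1 := tmul
      have h2 := tinvmul.const_mul a
      have h3 := (h1.add h2).neg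
      simp only [add_zero, mul_zero, neg_zero] at h3
      refine h3.congr fun z => ?_
      rw [hF]; ring
    have hFTC : ∫ z in Ioi c, F' z = 0 - F c :=
      integral_Ioi_of_hasDerivAt_of_tendsto' hderiv hF'int hFtend
    have hmono : ∫ z in Ioi c, (z^2 - τ) * Real.exp (-z^2/2) ≤ ∫ z in Ioi c, F' z := by
      refine setIntegral_mono_on hg1.integrableOn hF'int measurableSet_Ioi ?_
      intro z hz
      have hzc : c < z := hz
      have hzsq : τ < z^2 := by nlinarith
      rw [hF']
      refine mul_le_mul_of_nonneg_right ?_ (Real.exp_pos _).le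
      -- τ - 1 ≥ -a * (1 + 1/z²)
      have key : τ * (τ - 1) / (τ + 1) * (1 + 1/z^2) ≤ τ - 1 := by
        have hz2 : τ ≤ z^2 := hzsq.le
        have h1 : 1 + 1/z^2 ≤ (τ+1)/τ := by
          have ha1 : 1/z^2 ≤ 1/τ := one_div_le_one_div_of_le hτ0 hz2
          have ha2 : (τ+1)/τ = 1 + 1/τ := by field_simp
          linarith
        have h2 : 0 ≤ τ * (τ - 1) / (τ + 1) := by
          apply div_nonneg _ hτ1.le
          nlinarith
        calc τ * (τ - 1) / (τ + 1) * (1 + 1/z^2) ≤ τ * (τ - 1) / (τ + 1) * ((τ+1)/τ) :=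
              mul_le_mul_of_nonneg_left h1 h2
          _ = τ - 1 := by field_simp
      have haeq : a / z^2 = -(τ * (τ - 1) / (τ + 1) * (1/z^2)) := by
        rw [ha]; field_simp; ring
      have haeq2 : a = -(τ * (τ - 1) / (τ + 1)) := by rw [ha]; field_simp; ring
      rw [haeq, haeq2]
      nlinarith [key]
    have hFc : 0 - F c ≤ 2 * c⁻¹ * Real.exp (-τ/2) := by
      rw [hF]
      simp only [zero_sub, neg_neg, neg_mul]
      rw [show -c^2/2 = -τ/2 by rw [hcsq]]
      refine mul_le_mul_of_nonneg_right ?_ (Real.exp_pos _).le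
      -- c + a/c ≤ 2/c  ⟺  c² + a ≤ 2
      have h1 : c^2 + a ≤ 2 := by
        rw [hcsq, ha]
        have : τ * (1-τ)/(τ+1) ≤ 2 - τ := by
          rw [div_le_iff₀ hτ1]; nlinarith
        linarith
      have : c + a * c⁻¹ = (c^2 + a) * c⁻¹ := by field_simp
      rw [this, show 2 * c⁻¹ = 2 * c⁻¹ from rfl]
      exact mul_le_mul_of_nonneg_right h1 (by positivity)
    calc ∫ z in Ioi c, (z^2 - τ) * Real.exp (-z^2/2) ≤ ∫ z in Ioi c, F' z := hmono
      _ = 0 - F c := hFTC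
      _ ≤ 2 * c⁻¹ * Real.exp (-τ/2) := hFc

/-- Let Z ~ N(0,1) and τ ≥ 1. Then
0 < E[(Z² − τ)_+] ≤ (4/√(2π)) τ^{-1/2} e^{-τ/2}. -/
theorem mean_thresholded_chisq (τ : ℝ) (hτ : 1 ≤ τ) :
    0 < ∫ z, max (z ^ 2 - τ) 0 ∂(gaussianReal 0 1) ∧
    ∫ z, max (z ^ 2 - τ) 0 ∂(gaussianReal 0 1)
      ≤ 4 / Real.sqrt (2 * Real.pi) * τ ^ (-(1 : ℝ)/2) * Real.exp (-τ / 2) := by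
  have hτ0 : (0:ℝ) < τ := lt_of_lt_of_le one_pos hτ
  set c := Real.sqrt τ with hcdef
  have hc1 : 1 ≤ c := by
    rw [hcdef, show (1:ℝ) = Real.sqrt 1 by simp]
    exact Real.sqrt_le_sqrt hτ
  have hc0 : 0 < c := lt_of_lt_of_le one_pos hc1
  have hcsq : c^2 = τ := Real.sq_sqrt hτ0.le
  set K : ℝ := (Real.sqrt (2 * Real.pi))⁻¹ with hK
  have hKpos : 0 < K := by
    rw [hK]
    exact inv_pos.mpr (Real.sqrt_pos.mpr (by positivity))
  set g : ℝ → ℝ := fun x => Real.exp (-x^2/2) * max (x^2 - τ) 0 with hg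
  -- step A: reduce to volume integral
  have hA : (∫ z, max (z ^ 2 - τ) 0 ∂(gaussianReal 0 1)) = K * ∫ x, g x := by
    rw [gaussianReal_of_var_ne_zero 0 one_ne_zero]
    have hm : Measurable fun x => (gaussianPDFReal 0 1 x).toNNReal :=
      (measurable_gaussianPDFReal 0 1).real_toNNReal
    have h : (gaussianPDF 0 1) = fun x => ((gaussianPDFReal 0 1 x).toNNReal : ℝ≥0∞) := by
      funext x; simp [gaussianPDF, ENNReal.ofReal]
    rw [h, integral_withDensity_eq_integral_smul hm, ← integral_const_mul]
    congr 1; funext x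
    have hpdf : gaussianPDFReal 0 1 x = K * Real.exp (-x^2/2) := by
      rw [hK]; simp [gaussianPDFReal]
    rw [NNReal.smul_def, Real.coe_toNNReal _ (gaussianPDFReal_nonneg 0 1 x), hpdf]
    simp only [hg]
    rw [smul_eq_mul]
    ring
  -- integrability of g
  have hgint : Integrable g := by
    have hbd : Integrable (fun x : ℝ => x^2 * Real.exp (-x^2/2) + τ * Real.exp (-x^2/2)) :=
      hsq_int.add (hexp_int.const_mul τ)
    refine hbd.mono' ?_ ?_
    · refine Continuous.aestronglyMeasurable ?_
      exact (Real.continuous_exp.comp (by fun_prop)).mul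
        (((continuous_pow 2).sub continuous_const).max continuous_const)
    · filter_upwards with x
      have he := Real.exp_pos (-x^2/2)
      have hmx : max (x^2 - τ) 0 ≤ x^2 + τ := max_le (by linarith) (by positivity)
      have hmx0 : 0 ≤ max (x^2 - τ) 0 := le_max_right _ _
      rw [Real.norm_eq_abs, hg, abs_of_nonneg (mul_nonneg he.le hmx0)]
      nlinarith
  -- symmetry
  have hsymm : (∫ x, g x) = 2 * ∫ x in Ioi 0, g x := by
    calc (∫ x, g x) = ∫ x, g |x| :=
          integral_congr_ae (Filter.Eventually.of_forall fun x => by simp [hg, sq_abs])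
      _ = 2 * ∫ x in Ioi 0, g x := integral_comp_abs (f := g)
  -- split off [0, c]
  have hzero : (∫ x in Ioc 0 c, g x) = 0 := by
    rw [setIntegral_congr_fun measurableSet_Ioc (g := fun _ => (0:ℝ)) ?_, integral_zero]
    intro x hx
    have hx1 : 0 < x := hx.1
    have hx2 : x ≤ c := hx.2
    have : x^2 ≤ τ := by nlinarith
    simp [hg, max_eq_right (by linarith : x^2 - τ ≤ 0)]
  have hsplit : (∫ x in Ioi 0, g x) = ∫ x in Ioi c, g x := by
    rw [← Ioc_union_Ioi_eq_Ioi hc0.le,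
      setIntegral_union (Ioc_disjoint_Ioi le_rfl) measurableSet_Ioi hgint.integrableOn
        hgint.integrableOn, hzero, zero_add]
  -- rewrite on the tail
  have hmax : (∫ x in Ioi c, g x) = ∫ z in Ioi c, (z^2 - τ) * Real.exp (-z^2/2) := by
    refine setIntegral_congr_fun measurableSet_Ioi fun x hx => ?_
    have hxc : c < x := hx
    have : τ < x^2 := by nlinarith
    rw [hg]
    simp only
    rw [max_eq_left (by linarith : (0:ℝ) ≤ x^2 - τ)]
    ring
  obtain ⟨hJpos, hJle⟩ := J_bound τ hτ
  rw [← hcdef] at hJpos hJle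
  have hE : (∫ z, max (z ^ 2 - τ) 0 ∂(gaussianReal 0 1))
      = K * (2 * ∫ z in Ioi c, (z^2 - τ) * Real.exp (-z^2/2)) := by
    rw [hA, hsymm, hsplit, hmax]
  constructor
  · rw [hE]; positivity
  · rw [hE]
    have hrpow : τ ^ (-(1:ℝ)/2) = c⁻¹ := by
      rw [show (-(1:ℝ)/2) = -(1/2) by ring, Real.rpow_neg hτ0.le, ← Real.sqrt_eq_rpow, hcdef]
    rw [hrpow]
    have h1 : K * (2 * ∫ z in Ioi c, (z^2 - τ) * Real.exp (-z^2/2))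
        ≤ K * (2 * (2 * c⁻¹ * Real.exp (-τ/2))) := by
      refine mul_le_mul_of_nonneg_left ?_ hKpos.le
      linarith
    refine le_trans h1 (le_of_eq ?_)
    rw [hK, div_eq_mul_inv]
    ring
end

section
/- Let X ~ N(θ, 1/n) with n > 0, τ ≥ 1, μ₀ = E_{θ=0}[(X² − τ/n)_+], and ξ̂ = (X² − τ/n)_+ − μ₀. Then |E_θ[ξ̂] − θ²| ≤ min(2τ/n, θ²). -/
open MeasureTheory ProbabilityTheory Real
open scoped NNReal

namespace BiasAux

variable {v : ℝ≥0}

/-- Integral against a Gaussian measure as a Lebesgue integral against the pdf. -/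
lemma integral_gaussianReal_eq (hv : v ≠ 0) (m : ℝ) (h : ℝ → ℝ) :
    ∫ x, h x ∂(gaussianReal m v) = ∫ x, gaussianPDFReal m v x * h x := by
  rw [gaussianReal_of_var_ne_zero _ hv]
  have hpdf : gaussianPDF m v = fun x => ((Real.toNNReal (gaussianPDFReal m v x) : ℝ≥0) : ENNReal) := by
    ext x
    rw [gaussianPDF, ENNReal.ofReal]
  rw [hpdf, integral_withDensity_eq_integral_smul
    ((measurable_gaussianPDFReal m v).real_toNNReal) h]
  congr 1
  ext x
  simp [NNReal.smul_def, Real.coe_toNNReal _ (gaussianPDFReal_nonneg m v x)]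

lemma pdf_translate (m θ x : ℝ) : gaussianPDFReal m v (x + θ) = gaussianPDFReal (m - θ)  v x := by
  simp only [gaussianPDFReal]
  ring_nf

lemma pdf_neg (m x : ℝ) : gaussianPDFReal m v (-x) = gaussianPDFReal (-m) v x := by
  simp only [gaussianPDFReal]
  ring_nf

/-- translation: ∫ p_θ(x) h(x) dx = ∫ p_0(x) h(x+θ) dx -/
lemma integral_pdf_translate (θ : ℝ) (h : ℝ → ℝ) :
    ∫ x, gaussianPDFReal θ v x * h x = ∫ x, gaussianPDFReal 0 v x * h (x + θ) := by
  rw [← integral_add_right_eq_self (μ := volume) (fun x => gaussianPDFReal θ v x * h x) θ]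
  congr 1
  ext x
  rw [pdf_translate θ θ x]
  simp

end BiasAux

namespace Part2
open BiasAux

lemma integrable_sq_mul_exp {b : ℝ} (hb : 0 < b) :
    Integrable fun x : ℝ => x ^ 2 * rexp (-b * x ^ 2) := by
  apply Integrable.mono' ((integrable_exp_neg_mul_sq (b := b/2) (by linarith)).const_mul (2/b))
  · exact ((measurable_id.pow_const 2).mul
      (((measurable_id.pow_const 2).const_mul (-b)).exp)).aestronglyMeasurable
  · filter_upwards with x
    have h1 : (b/2) * x ^ 2 ≤ rexp ((b/2) * x ^ 2) := by
      have := Real.add_one_le_exp ((b/2) * x ^ 2); linarith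
    have h2 : x ^ 2 ≤ (2/b) * rexp ((b/2) * x ^ 2) := by
      calc x ^ 2 = (2/b) * ((b/2) * x ^ 2) := by field_simp
        _ ≤ (2/b) * rexp ((b/2) * x ^ 2) := by
            apply mul_le_mul_of_nonneg_left h1; positivity
    have hx : ‖x ^ 2 * rexp (-b * x ^ 2)‖ = x ^ 2 * rexp (-b * x ^ 2) := by
      rw [Real.norm_eq_abs, abs_of_nonneg]; positivity
    rw [hx]
    calc x ^ 2 * rexp (-b * x ^ 2) ≤ ((2/b) * rexp ((b/2) * x ^ 2)) * rexp (-b * x ^ 2) := by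
          apply mul_le_mul_of_nonneg_right h2 (Real.exp_nonneg _)
      _ = (2/b) * rexp (-(b/2) * x ^ 2) := by
          rw [mul_assoc, ← Real.exp_add]; ring_nf

variable {v : ℝ≥0}

lemma pdf_zero_eq (hv : v ≠ 0) (x : ℝ) :
    gaussianPDFReal 0 v x = (√(2 * π * v))⁻¹ * rexp (-(2 * (v:ℝ))⁻¹ * x ^ 2) := by
  have hV : (0:ℝ) < v := lt_of_le_of_ne (v.coe_nonneg) (by exact_mod_cast (Ne.symm hv))
  rw [gaussianPDFReal]
  congr 1
  rw [sub_zero]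
  congr 1
  field_simp

lemma integrable_sq_mul_pdf (hv : v ≠ 0) :
    Integrable fun x : ℝ => x ^ 2 * gaussianPDFReal 0 v x := by
  have hV : (0:ℝ) < v := lt_of_le_of_ne (v.coe_nonneg) (by exact_mod_cast (Ne.symm hv))
  have : (fun x : ℝ => x ^ 2 * gaussianPDFReal 0 v x)
      = fun x => (√(2 * π * v))⁻¹ * (x ^ 2 * rexp (-(2 * (v:ℝ))⁻¹ * x ^ 2)) := by
    ext x; rw [pdf_zero_eq hv]; ring
  rw [this]
  exact (integrable_sq_mul_exp (by positivity)).const_mul _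

lemma integrable_id_mul_pdf (hv : v ≠ 0) :
    Integrable fun x : ℝ => x * gaussianPDFReal 0 v x := by
  apply Integrable.mono' ((integrable_sq_mul_pdf hv).add (integrable_gaussianPDFReal 0 v))
  · exact (measurable_id.mul (measurable_gaussianPDFReal 0 v)).aestronglyMeasurable
  · filter_upwards with x
    have hp := gaussianPDFReal_nonneg 0 v x
    have h1 : |x| ≤ x ^ 2 + 1 := by nlinarith [abs_nonneg x, sq_abs x]
    calc ‖x * gaussianPDFReal 0 v x‖ = |x| * gaussianPDFReal 0 v x := by
          rw [Real.norm_eq_abs, abs_mul, abs_of_nonneg hp]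
      _ ≤ (x ^ 2 + 1) * gaussianPDFReal 0 v x := by
          apply mul_le_mul_of_nonneg_right h1 hp
      _ = x ^ 2 * gaussianPDFReal 0 v x + gaussianPDFReal 0 v x := by ring

lemma integral_id_mul_pdf (hv : v ≠ 0) :
    ∫ x, x * gaussianPDFReal 0 v x = 0 := by
  have h := integral_neg_eq_self (fun x : ℝ => x * gaussianPDFReal 0 v x) volume
  have h2 : (∫ x : ℝ, -x * gaussianPDFReal 0 v (-x)) = ∫ x : ℝ, x * gaussianPDFReal 0 v x := h
  have h3 : (∫ x : ℝ, -x * gaussianPDFReal 0 v (-x)) = -∫ x : ℝ, x * gaussianPDFReal 0 v x := by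
    rw [← integral_neg]
    congr 1
    ext x
    rw [pdf_neg, neg_zero]
    ring
  linarith [h2.symm.trans h3]

/-- complete the square: p₀(x) e^{cx} = e^{Vc²/2} p_{Vc}(x) -/
lemma pdf_mul_exp (hv : v ≠ 0) (c x : ℝ) :
    gaussianPDFReal 0 v x * rexp (c * x)
      = rexp ((v:ℝ) * c ^ 2 / 2) * gaussianPDFReal ((v:ℝ) * c) v x := by
  have hV : (0:ℝ) < v := lt_of_le_of_ne (v.coe_nonneg) (by exact_mod_cast (Ne.symm hv))
  simp only [gaussianPDFReal, sub_zero]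
  have key : rexp (-x ^ 2 / (2 * (v:ℝ))) * rexp (c * x)
      = rexp ((v:ℝ) * c ^ 2 / 2) * rexp (-(x - (v:ℝ) * c) ^ 2 / (2 * (v:ℝ))) := by
    rw [← Real.exp_add, ← Real.exp_add]
    congr 1
    field_simp
    ring
  rw [mul_assoc, key]
  ring

lemma integrable_pdf_mul_exp (hv : v ≠ 0) (c : ℝ) :
    Integrable fun x => gaussianPDFReal 0 v x * rexp (c * x) := by
  have : (fun x => gaussianPDFReal 0 v x * rexp (c * x))
      = fun x => rexp ((v:ℝ) * c ^ 2 / 2) * gaussianPDFReal ((v:ℝ) * c) v x := by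
    ext x; exact pdf_mul_exp hv c x
  rw [this]
  exact (integrable_gaussianPDFReal _ v).const_mul _

lemma integral_pdf_mul_exp (hv : v ≠ 0) (c : ℝ) :
    ∫ x, gaussianPDFReal 0 v x * rexp (c * x) = rexp ((v:ℝ) * c ^ 2 / 2) := by
  have : (fun x => gaussianPDFReal 0 v x * rexp (c * x))
      = fun x => rexp ((v:ℝ) * c ^ 2 / 2) * gaussianPDFReal ((v:ℝ) * c) v x := by
    ext x; exact pdf_mul_exp hv c x
  rw [this, integral_const_mul, integral_gaussianPDFReal_eq_one _ hv, mul_one]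

lemma integrable_pdf_mul_cosh (hv : v ≠ 0) (c : ℝ) :
    Integrable fun x => gaussianPDFReal 0 v x * Real.cosh (c * x) := by
  have : (fun x => gaussianPDFReal 0 v x * Real.cosh (c * x))
      = fun x => (gaussianPDFReal 0 v x * rexp (c * x)
          + gaussianPDFReal 0 v x * rexp ((-c) * x)) / 2 := by
    ext x; rw [Real.cosh_eq]; ring_nf
  rw [this]
  exact (((integrable_pdf_mul_exp hv c).add (integrable_pdf_mul_exp hv (-c))).div_const 2)

lemma integral_pdf_mul_cosh (hv : v ≠ 0) (c : ℝ) :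
    ∫ x, gaussianPDFReal 0 v x * Real.cosh (c * x) = rexp ((v:ℝ) * c ^ 2 / 2) := by
  have : (fun x => gaussianPDFReal 0 v x * Real.cosh (c * x))
      = fun x => (gaussianPDFReal 0 v x * rexp (c * x)
          + gaussianPDFReal 0 v x * rexp ((-c) * x)) / 2 := by
    ext x; rw [Real.cosh_eq]; ring_nf
  rw [this, integral_div, integral_add (integrable_pdf_mul_exp hv c)
    (integrable_pdf_mul_exp hv (-c)), integral_pdf_mul_exp hv c, integral_pdf_mul_exp hv (-c)]
  rw [neg_pow]
  ring_nf

/-- the two-sided pdf identity -/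
lemma pdf_add_pdf_neg (hv : v ≠ 0) (θ x : ℝ) :
    gaussianPDFReal θ v x + gaussianPDFReal (-θ) v x
      = 2 * gaussianPDFReal 0 v x
          * (rexp (-θ ^ 2 / (2 * (v:ℝ))) * Real.cosh (θ / (v:ℝ) * x)) := by
  have hV : (0:ℝ) < v := lt_of_le_of_ne (v.coe_nonneg) (by exact_mod_cast (Ne.symm hv))
  simp only [gaussianPDFReal, sub_zero, Real.cosh_eq]
  have k1 : rexp (-(x - θ) ^ 2 / (2 * (v:ℝ)))
      = rexp (-x ^ 2 / (2 * (v:ℝ))) * (rexp (-θ ^ 2 / (2 * (v:ℝ))) * rexp (θ / (v:ℝ) * x)) := by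
    rw [← Real.exp_add, ← Real.exp_add]
    congr 1
    field_simp
    ring
  have k2 : rexp (-(x - -θ) ^ 2 / (2 * (v:ℝ)))
      = rexp (-x ^ 2 / (2 * (v:ℝ))) * (rexp (-θ ^ 2 / (2 * (v:ℝ))) * rexp (-(θ / (v:ℝ) * x))) := by
    rw [← Real.exp_add, ← Real.exp_add]
    congr 1
    field_simp
    ring
  rw [k1, k2]
  ring

end Part2

namespace Part3
open BiasAux Part2

variable {v : ℝ≥0}

/-- the "cap" function g(x) = max(a - x², 0) -/
noncomputable def g (a x : ℝ) : ℝ := max (a - x ^ 2) 0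

lemma g_nonneg (a x : ℝ) : 0 ≤ g a x := le_max_right _ _

lemma g_le {a : ℝ} (ha : 0 ≤ a) (x : ℝ) : g a x ≤ a := by
  apply max_le _ ha
  nlinarith [sq_nonneg x]

lemma g_even (a x : ℝ) : g a (-x) = g a x := by simp [g]

lemma g_meas (a : ℝ) : Measurable (g a) :=
  (measurable_const.sub (measurable_id.pow_const 2)).max measurable_const

lemma g_anti {a x y : ℝ} (h : x ^ 2 ≤ y ^ 2) : g a y ≤ g a x :=
  max_le_max (by linarith) le_rfl

lemma abs_le_abs_of_sq_le_sq' {x y : ℝ} (h : x ^ 2 ≤ y ^ 2) : |x| ≤ |y| := by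
  nlinarith [sq_abs x, sq_abs y, abs_nonneg x, abs_nonneg y]

/-- J(θ) = ∫ p₀(x) g(x+θ) dx -/
noncomputable def J (v : ℝ≥0) (a θ : ℝ) : ℝ := ∫ x, gaussianPDFReal 0 v x * g a (x + θ)

lemma integrable_pdf_mul_g_comp (m : ℝ) {a : ℝ} (ha : 0 ≤ a) (c : ℝ) :
    Integrable fun x => gaussianPDFReal m v x * g a (x + c) := by
  have h := Integrable.bdd_mul (f := fun x => g a (x + c)) (c := a) (integrable_gaussianPDFReal m v)
    (((g_meas a).comp (measurable_id.add_const c)).aestronglyMeasurable)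
    (ae_of_all _ fun x => by rw [Real.norm_eq_abs, abs_of_nonneg (g_nonneg _ _)]; exact g_le ha _)
  have heq : (fun x => g a (x + c) * gaussianPDFReal m v x)
      = fun x => gaussianPDFReal m v x * g a (x + c) := by ext x; ring
  rwa [heq] at h

lemma J_nonneg (a θ : ℝ) : 0 ≤ J v a θ :=
  integral_nonneg fun x => mul_nonneg (gaussianPDFReal_nonneg _ _ _) (g_nonneg _ _)

lemma J_le (hv : v ≠ 0) {a : ℝ} (ha : 0 ≤ a) (θ : ℝ) : J v a θ ≤ a := by
  have h1 : J v a θ ≤ ∫ x, gaussianPDFReal 0 v x * a := by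
    apply integral_mono (integrable_pdf_mul_g_comp 0 ha θ)
      ((integrable_gaussianPDFReal 0 v).mul_const a)
    intro x
    exact mul_le_mul_of_nonneg_left (g_le ha _) (gaussianPDFReal_nonneg _ _ _)
  rwa [integral_mul_const, integral_gaussianPDFReal_eq_one _ hv, one_mul] at h1

lemma J_zero (a : ℝ) : J v a 0 = ∫ x, gaussianPDFReal 0 v x * g a x := by
  simp [J]

/-- symmetry: J(θ) = ∫ p₀(x) g(x−θ) dx -/
lemma J_symm (a θ : ℝ) : J v a θ = ∫ x, gaussianPDFReal 0 v x * g a (x - θ) := by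
  calc J v a θ = ∫ x, gaussianPDFReal 0 v (-x) * g a (-x + θ) :=
        (integral_neg_eq_self (fun x => gaussianPDFReal 0 v x * g a (x + θ)) volume).symm
    _ = ∫ x, gaussianPDFReal 0 v x * g a (x - θ) := by
        congr 1
        ext x
        rw [pdf_neg, neg_zero]
        have : -x + θ = -(x - θ) := by ring
        rw [this, g_even]

/-- convexity bound: J(0) − θ² ≤ J(θ) -/
lemma J_ge_of_convex (hv : v ≠ 0) {a : ℝ} (ha : 0 ≤ a) (θ : ℝ) :
    J v a 0 - θ ^ 2 ≤ J v a θ := by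
  have hconv : ∀ x : ℝ, 2 * (g a x - θ ^ 2) ≤ g a (x + θ) + g a (x - θ) := by
    intro x
    have h1 : a - (x + θ) ^ 2 ≤ g a (x + θ) := le_max_left _ _
    have h2 : a - (x - θ) ^ 2 ≤ g a (x - θ) := le_max_left _ _
    have h3 : (0:ℝ) ≤ g a (x + θ) := g_nonneg _ _
    have h4 : (0:ℝ) ≤ g a (x - θ) := g_nonneg _ _
    rcases max_cases (a - x ^ 2) (0:ℝ) with ⟨hEq, _⟩ | ⟨hEq, _⟩ <;>
      · rw [g, hEq]; nlinarith
  have hmono : ∫ x, gaussianPDFReal 0 v x * (2 * (g a x - θ ^ 2))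
      ≤ ∫ x, gaussianPDFReal 0 v x * (g a (x + θ) + g a (x - θ)) := by
    apply integral_mono
    · have : (fun x => gaussianPDFReal 0 v x * (2 * (g a x - θ ^ 2)))
          = fun x => 2 * (gaussianPDFReal 0 v x * g a (x + 0)) -
              (2 * θ ^ 2) * gaussianPDFReal 0 v x := by
        ext x; simp only [add_zero]; ring
      rw [this]
      exact (((integrable_pdf_mul_g_comp 0 ha 0).const_mul 2).sub
        ((integrable_gaussianPDFReal 0 v).const_mul _))
    · have : (fun x => gaussianPDFReal 0 v x * (g a (x + θ) + g a (x - θ)))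
          = fun x => gaussianPDFReal 0 v x * g a (x + θ) +
              gaussianPDFReal 0 v x * g a (x + (-θ)) := by
        ext x; rw [sub_eq_add_neg]; ring
      rw [this]
      exact (integrable_pdf_mul_g_comp 0 ha θ).add (integrable_pdf_mul_g_comp 0 ha (-θ))
    · intro x
      exact mul_le_mul_of_nonneg_left (hconv x) (gaussianPDFReal_nonneg _ _ _)
  have hL : ∫ x, gaussianPDFReal 0 v x * (2 * (g a x - θ ^ 2))
      = 2 * J v a 0 - 2 * θ ^ 2 := by
    have heq : (fun x => gaussianPDFReal 0 v x * (2 * (g a x - θ ^ 2)))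
        = fun x => 2 * (gaussianPDFReal 0 v x * g a (x + 0)) -
            (2 * θ ^ 2) * gaussianPDFReal 0 v x := by
      ext x; simp only [add_zero]; ring
    rw [heq, integral_sub (((integrable_pdf_mul_g_comp 0 ha 0)).const_mul 2)
      ((integrable_gaussianPDFReal 0 v).const_mul _), integral_const_mul, integral_const_mul,
      integral_gaussianPDFReal_eq_one _ hv]
    show 2 * J v a 0 - 2 * θ ^ 2 * 1 = _
    ring
  have hR : ∫ x, gaussianPDFReal 0 v x * (g a (x + θ) + g a (x - θ))
      = 2 * J v a θ := by
    have heq : (fun x => gaussianPDFReal 0 v x * (g a (x + θ) + g a (x - θ)))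
        = fun x => gaussianPDFReal 0 v x * g a (x + θ) +
            gaussianPDFReal 0 v x * g a (x - θ) := by
      ext x; ring
    have hint2 : Integrable fun x => gaussianPDFReal 0 v x * g a (x - θ) := by
      have h := integrable_pdf_mul_g_comp (v := v) 0 ha (-θ)
      have : (fun x => gaussianPDFReal 0 v x * g a (x + (-θ)))
          = fun x => gaussianPDFReal 0 v x * g a (x - θ) := by
        ext x; rw [← sub_eq_add_neg]
      rwa [this] at h
    rw [heq, integral_add (integrable_pdf_mul_g_comp 0 ha θ) hint2]
    have : (∫ x, gaussianPDFReal 0 v x * g a (x - θ)) = J v a θ := (J_symm a θ).symm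
    rw [this]
    show J v a θ + J v a θ = _
    ring
  rw [hL, hR] at hmono
  linarith

/-- Anderson-type inequality: J(θ) ≤ J(0). -/
lemma J_le_J_zero (hv : v ≠ 0) {a : ℝ} (ha : 0 ≤ a) (θ : ℝ) :
    J v a θ ≤ J v a 0 := by
  rcases eq_or_ne θ 0 with rfl | hθ
  · exact le_rfl
  have hV : (0:ℝ) < v := lt_of_le_of_ne (v.coe_nonneg) (by exact_mod_cast (Ne.symm hv))
  set V : ℝ := (v:ℝ) with hVdef
  set lam : ℝ := rexp (-θ ^ 2 / (2 * V)) with hlam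
  set mu : ℝ := θ / V with hmu
  have hlampos : 0 < lam := Real.exp_pos _
  have hlam1 : lam < 1 := by
    rw [hlam, Real.exp_lt_one_iff, neg_div]
    have : 0 < θ ^ 2 / (2 * V) := by positivity
    linarith
  have hmune : mu ≠ 0 := div_ne_zero hθ (ne_of_gt hV)
  -- basic integrability
  have hintg : ∀ m : ℝ, Integrable fun x => gaussianPDFReal m v x * g a x := by
    intro m
    have h := integrable_pdf_mul_g_comp (v := v) m ha 0
    simpa using h
  have hintcosh : Integrable fun x => gaussianPDFReal 0 v x * Real.cosh (mu * x) :=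
    integrable_pdf_mul_cosh hv mu
  have hintcoshg : Integrable fun x =>
      gaussianPDFReal 0 v x * Real.cosh (mu * x) * (lam * g a x) := by
    have h := Integrable.bdd_mul (f := fun x => lam * g a x) (c := lam * a) hintcosh
      ((measurable_const.mul (g_meas a)).aestronglyMeasurable)
      (ae_of_all _ fun x => by
        rw [Real.norm_eq_abs, abs_mul, abs_of_nonneg hlampos.le,
          abs_of_nonneg (g_nonneg _ _)]
        exact mul_le_mul_of_nonneg_left (g_le ha x) hlampos.le)
    have heq : (fun x => (lam * g a x) * (gaussianPDFReal 0 v x * Real.cosh (mu * x)))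
        = fun x => gaussianPDFReal 0 v x * Real.cosh (mu * x) * (lam * g a x) := by
      ext x; ring
    rwa [heq] at h
  -- J θ = ∫ p₀ · λ cosh(μx) · g
  have hJθ : J v a θ = ∫ x, gaussianPDFReal 0 v x * Real.cosh (mu * x) * (lam * g a x) := by
    have ht : J v a θ = ∫ x, gaussianPDFReal θ v x * g a x := by
      rw [integral_pdf_translate θ (g a)]; rfl
    have hsym : (∫ x, gaussianPDFReal θ v x * g a x)
        = ∫ x, gaussianPDFReal (-θ) v x * g a x := by
      calc (∫ x, gaussianPDFReal θ v x * g a x)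
          = ∫ x, gaussianPDFReal θ v (-x) * g a (-x) :=
            (integral_neg_eq_self (fun x => gaussianPDFReal θ v x * g a x) volume).symm
        _ = ∫ x, gaussianPDFReal (-θ) v x * g a x := by
            congr 1; ext x; rw [pdf_neg, g_even]
    have hsum : (∫ x, gaussianPDFReal θ v x * g a x)
          + ∫ x, gaussianPDFReal (-θ) v x * g a x
        = ∫ x, 2 * (gaussianPDFReal 0 v x * Real.cosh (mu * x) * (lam * g a x)) := by
      rw [← integral_add (hintg θ) (hintg (-θ))]
      congr 1
      ext x
      have h := pdf_add_pdf_neg hv θ x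
      calc gaussianPDFReal θ v x * g a x + gaussianPDFReal (-θ) v x * g a x
          = (gaussianPDFReal θ v x + gaussianPDFReal (-θ) v x) * g a x := by ring
        _ = 2 * gaussianPDFReal 0 v x * (rexp (-θ ^ 2 / (2 * V)) *
              Real.cosh (θ / V * x)) * g a x := by rw [h]
        _ = 2 * (gaussianPDFReal 0 v x * Real.cosh (mu * x) * (lam * g a x)) := by
            rw [← hlam, ← hmu]; ring
    rw [integral_const_mul] at hsum
    rw [← hsym] at hsum
    rw [ht]
    linarith [hsum]
  -- the weight function w
  set w : ℝ → ℝ := fun x => 1 - lam * Real.cosh (mu * x) with hw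
  have hintw : Integrable fun x => gaussianPDFReal 0 v x * w x := by
    have heq : (fun x => gaussianPDFReal 0 v x * w x)
        = fun x => gaussianPDFReal 0 v x -
            lam * (gaussianPDFReal 0 v x * Real.cosh (mu * x)) := by
      ext x; rw [hw]; ring
    rw [heq]
    exact (integrable_gaussianPDFReal 0 v).sub (hintcosh.const_mul lam)
  have hw0 : (∫ x, gaussianPDFReal 0 v x * w x) = 0 := by
    have heq : (fun x => gaussianPDFReal 0 v x * w x)
        = fun x => gaussianPDFReal 0 v x -
            lam * (gaussianPDFReal 0 v x * Real.cosh (mu * x)) := by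
      ext x; rw [hw]; ring
    rw [heq, integral_sub (integrable_gaussianPDFReal 0 v) (hintcosh.const_mul lam),
      integral_const_mul, integral_pdf_mul_cosh hv, integral_gaussianPDFReal_eq_one _ hv]
    rw [hlam, ← Real.exp_add]
    have harg : -θ ^ 2 / (2 * V) + V * mu ^ 2 / 2 = 0 := by
      rw [hmu]; field_simp; ring
    rw [harg, Real.exp_zero]
    ring
  -- find the crossing point x₀ of w via IVT
  have hwcont : Continuous w := by
    rw [hw]
    exact continuous_const.sub (continuous_const.mul
      (Real.continuous_cosh.comp (continuous_const.mul continuous_id)))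
  set x₁ : ℝ := (Real.log (2 / lam) + 1) / |mu| with hx₁
  have hlog : 0 < Real.log (2 / lam) := by
    apply Real.log_pos
    rw [lt_div_iff₀ hlampos]
    linarith
  have hmuabs : 0 < |mu| := abs_pos.mpr hmune
  have hx₁pos : 0 < x₁ := by positivity
  have hwx₁ : w x₁ < 0 := by
    have hcosh : rexp (|mu| * x₁) / 2 ≤ Real.cosh (mu * x₁) := by
      rw [← Real.cosh_abs, Real.cosh_eq, abs_mul, abs_of_pos hx₁pos]
      have := Real.exp_pos (-(|mu| * x₁))
      linarith
    have hval : |mu| * x₁ = Real.log (2 / lam) + 1 := by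
      rw [hx₁]; field_simp
    have hexp : rexp (|mu| * x₁) = (2 / lam) * rexp 1 := by
      rw [hval, Real.exp_add, Real.exp_log (by positivity)]
    have he1 : (2:ℝ) < rexp 1 * 2 := by nlinarith [Real.exp_one_gt_d9]
    have h2 : 1 < lam * Real.cosh (mu * x₁) := by
      calc 1 < lam * (rexp (|mu| * x₁) / 2) := by
            have heq2 : lam * (rexp (|mu| * x₁) / 2) = rexp 1 := by
              rw [hexp]; field_simp [hlampos.ne']
            rw [heq2]
            nlinarith [Real.exp_one_gt_d9]
        _ ≤ lam * Real.cosh (mu * x₁) :=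
            mul_le_mul_of_nonneg_left hcosh hlampos.le
    rw [hw]
    simp only
    linarith
  have hw0pos : 0 ≤ w 0 := by
    rw [hw]
    simp only [mul_zero, Real.cosh_zero, mul_one]
    linarith
  obtain ⟨x₀, hx₀mem, hwx₀⟩ : ∃ x₀ ∈ Set.Icc (0:ℝ) x₁, w x₀ = 0 := by
    have hsub := intermediate_value_Icc' hx₁pos.le hwcont.continuousOn
    have h0mem : (0:ℝ) ∈ Set.Icc (w x₁) (w 0) := ⟨hwx₁.le, hw0pos⟩
    obtain ⟨x₀, hx₀, hx₀val⟩ := hsub h0mem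
    exact ⟨x₀, hx₀, hx₀val⟩
  -- pointwise single-crossing inequality
  set c : ℝ := g a x₀ with hc
  have hx₀nonneg : 0 ≤ x₀ := hx₀mem.1
  have hpoint : ∀ x, 0 ≤ (g a x - c) * w x := by
    intro x
    rcases le_total (x ^ 2) (x₀ ^ 2) with hle | hle
    · have hg : c ≤ g a x := g_anti hle
      have hwx : 0 ≤ w x := by
        have hcosh : Real.cosh (mu * x) ≤ Real.cosh (mu * x₀) := by
          rw [Real.cosh_le_cosh, abs_mul, abs_mul]
          exact mul_le_mul_of_nonneg_left (abs_le_abs_of_sq_le_sq' hle) (abs_nonneg mu)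
        have : lam * Real.cosh (mu * x) ≤ lam * Real.cosh (mu * x₀) :=
          mul_le_mul_of_nonneg_left hcosh hlampos.le
        have hwx₀' : 1 - lam * Real.cosh (mu * x₀) = 0 := hwx₀
        rw [hw]; simp only; linarith
      exact mul_nonneg (by linarith) hwx
    · have hg : g a x ≤ c := g_anti hle
      have hwx : w x ≤ 0 := by
        have hcosh : Real.cosh (mu * x₀) ≤ Real.cosh (mu * x) := by
          rw [Real.cosh_le_cosh, abs_mul, abs_mul]
          exact mul_le_mul_of_nonneg_left (abs_le_abs_of_sq_le_sq' hle) (abs_nonneg mu)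
        have : lam * Real.cosh (mu * x₀) ≤ lam * Real.cosh (mu * x) :=
          mul_le_mul_of_nonneg_left hcosh hlampos.le
        have hwx₀' : 1 - lam * Real.cosh (mu * x₀) = 0 := hwx₀
        rw [hw]; simp only; linarith
      exact mul_nonneg_iff.mpr (Or.inr ⟨by linarith, hwx⟩)
  -- combine
  have hkey : 0 ≤ ∫ x, gaussianPDFReal 0 v x * ((g a x - c) * w x) :=
    integral_nonneg fun x => mul_nonneg (gaussianPDFReal_nonneg _ _ _) (hpoint x)
  have hexpand : (∫ x, gaussianPDFReal 0 v x * ((g a x - c) * w x))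
      = (J v a 0 - J v a θ) - c * ∫ x, gaussianPDFReal 0 v x * w x := by
    have heq : (fun x => gaussianPDFReal 0 v x * ((g a x - c) * w x))
        = fun x => (gaussianPDFReal 0 v x * g a x -
            gaussianPDFReal 0 v x * Real.cosh (mu * x) * (lam * g a x)) -
            c * (gaussianPDFReal 0 v x * w x) := by
      ext x; rw [hw]; ring
    have h1 : Integrable (fun x => gaussianPDFReal 0 v x * g a x -
        gaussianPDFReal 0 v x * Real.cosh (mu * x) * (lam * g a x)) volume :=
      (hintg 0).sub hintcoshg
    have h2 : Integrable (fun x => c * (gaussianPDFReal 0 v x * w x)) volume :=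
      hintw.const_mul c
    rw [heq, integral_sub h1 h2, integral_sub (hintg 0) hintcoshg, integral_const_mul]
    rw [← hJθ]
    have : (∫ x, gaussianPDFReal 0 v x * g a x) = J v a 0 := (J_zero a).symm
    rw [this]
  rw [hexpand, hw0] at hkey
  linarith

end Part3
open BiasAux Part2 Part3

/-- Let X ~ N(θ, 1/n) with n > 0, τ ≥ 1, μ₀ = E_{θ=0}[(X² − τ/n)_+],
and ξ̂ = (X² − τ/n)_+ − μ₀. Then |E_θ[ξ̂] − θ²| ≤ min(2τ/n, θ²). -/
theorem bias_thresholded_estimator (n : ℝ≥0) (hn : 0 < n) (τ : ℝ) (hτ : 1 ≤ τ)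
    (θ : ℝ) (μ₀ : ℝ)
    (hμ₀ : μ₀ = ∫ x, max (x ^ 2 - τ / n) 0 ∂(gaussianReal 0 (1 / n))) :
    |(∫ x, (max (x ^ 2 - τ / n) 0 - μ₀) ∂(gaussianReal θ (1 / n))) - θ ^ 2|
      ≤ min (2 * τ / n) (θ ^ 2) := by
  set v : ℝ≥0 := 1 / n with hvdef
  have hv : v ≠ 0 := by rw [hvdef, one_div]; exact inv_ne_zero hn.ne'
  have hnR : (0:ℝ) < (n:ℝ) := by exact_mod_cast hn
  set a : ℝ := τ / (n:ℝ) with hadef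
  have ha : 0 < a := div_pos (by linarith) hnR
  -- decomposition of the positive part
  have hF : ∀ y : ℝ, max (y ^ 2 - a) 0 = y ^ 2 - a + g a y := by
    intro y
    rw [Part3.g]
    rcases max_cases (y ^ 2 - a) (0:ℝ) with ⟨h1, h2⟩ | ⟨h1, h2⟩ <;>
      rcases max_cases (a - y ^ 2) (0:ℝ) with ⟨h3, h4⟩ | ⟨h3, h4⟩ <;> linarith
  -- integrability of p₀ · F(·+θ')
  have hdecomp : ∀ θ' : ℝ, (fun x => gaussianPDFReal 0 v x * (max ((x + θ') ^ 2 - a) 0))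
      = fun x => (x ^ 2 * gaussianPDFReal 0 v x + (2 * θ') * (x * gaussianPDFReal 0 v x))
          + ((θ' ^ 2 - a) * gaussianPDFReal 0 v x + gaussianPDFReal 0 v x * g a (x + θ')) := by
    intro θ'
    ext x
    rw [hF]
    ring
  have hIint : ∀ θ' : ℝ,
      Integrable (fun x => gaussianPDFReal 0 v x * (max ((x + θ') ^ 2 - a) 0)) := by
    intro θ'
    rw [hdecomp θ']
    exact (((integrable_sq_mul_pdf hv).add
        ((integrable_id_mul_pdf hv).const_mul _)).add
      (((integrable_gaussianPDFReal 0 v).const_mul _).add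
        (integrable_pdf_mul_g_comp 0 ha.le θ')))
  -- value of ∫ p₀ F(·+θ')
  have hIval : ∀ θ' : ℝ, (∫ x, gaussianPDFReal 0 v x * (max ((x + θ') ^ 2 - a) 0))
      = (∫ x, x ^ 2 * gaussianPDFReal 0 v x) + θ' ^ 2 - a + J v a θ' := by
    intro θ'
    have hA1 : Integrable (fun x => x ^ 2 * gaussianPDFReal 0 v x) volume :=
      integrable_sq_mul_pdf hv
    have hA2 : Integrable (fun x => (2 * θ') * (x * gaussianPDFReal 0 v x)) volume :=
      (integrable_id_mul_pdf hv).const_mul _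
    have hB1 : Integrable (fun x => (θ' ^ 2 - a) * gaussianPDFReal 0 v x) volume :=
      (integrable_gaussianPDFReal 0 v).const_mul _
    have hB2 : Integrable (fun x => gaussianPDFReal 0 v x * g a (x + θ')) volume :=
      integrable_pdf_mul_g_comp 0 ha.le θ'
    have hA : Integrable (fun x => x ^ 2 * gaussianPDFReal 0 v x
        + (2 * θ') * (x * gaussianPDFReal 0 v x)) volume := hA1.add hA2
    have hB : Integrable (fun x => (θ' ^ 2 - a) * gaussianPDFReal 0 v x
        + gaussianPDFReal 0 v x * g a (x + θ')) volume := hB1.add hB2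
    rw [hdecomp θ', integral_add hA hB, integral_add hA1 hA2, integral_add hB1 hB2,
      integral_const_mul, integral_const_mul, integral_id_mul_pdf hv,
      integral_gaussianPDFReal_eq_one _ hv]
    show (∫ x, x ^ 2 * gaussianPDFReal 0 v x) + 2 * θ' * 0 + ((θ' ^ 2 - a) * 1 + J v a θ') = _
    ring
  -- μ₀ in pdf form
  have hμ₀' : μ₀ = (∫ x, x ^ 2 * gaussianPDFReal 0 v x) - a + J v a 0 := by
    rw [hμ₀, integral_gaussianReal_eq hv 0 _]
    have h0 := hIval 0
    simp only [add_zero] at h0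
    rw [h0]
    ring
  -- the main integral
  have hmain : (∫ x, (max (x ^ 2 - a) 0 - μ₀) ∂(gaussianReal θ v)) - θ ^ 2
      = J v a θ - J v a 0 := by
    rw [integral_gaussianReal_eq hv θ _]
    have htr := integral_pdf_translate (v := v) θ (fun y => max (y ^ 2 - a) 0 - μ₀)
    rw [htr]
    have hsplit : (fun x => gaussianPDFReal 0 v x * (max ((x + θ) ^ 2 - a) 0 - μ₀))
        = fun x => gaussianPDFReal 0 v x * (max ((x + θ) ^ 2 - a) 0)
            - μ₀ * gaussianPDFReal 0 v x := by
      ext x; ring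
    rw [hsplit, integral_sub (hIint θ) ((integrable_gaussianPDFReal 0 v).const_mul μ₀),
      integral_const_mul, integral_gaussianPDFReal_eq_one _ hv, hIval θ, hμ₀']
    ring
  rw [hmain]
  -- the four inequalities
  have hB1 : J v a θ - J v a 0 ≤ 0 := sub_nonpos.mpr (J_le_J_zero hv ha.le θ)
  have hB2 : -θ ^ 2 ≤ J v a θ - J v a 0 := by
    have := J_ge_of_convex hv ha.le θ
    linarith
  have hB3 : -(2 * τ / (n:ℝ)) ≤ J v a θ - J v a 0 := by
    have h1 : 0 ≤ J v a θ := J_nonneg a θ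
    have h2 : J v a 0 ≤ a := J_le hv ha.le 0
    have h3 : a ≤ 2 * τ / (n:ℝ) := by
      rw [hadef]
      rw [mul_div_assoc]
      linarith
    linarith
  have h2τ : 0 ≤ 2 * τ / (n:ℝ) := by positivity
  apply le_min
  · exact abs_le.mpr ⟨hB3, by linarith⟩
  · exact abs_le.mpr ⟨hB2, by nlinarith [sq_nonneg θ]⟩
end

section
/- The von Mises-type function u_β(φ) = c e^{d cos(φ−β)} + c e^{−d cos(φ−β)} + c e^{d sin(φ−β)} + c e^{−d sin(φ−β)} with c, d > 0 is periodic with period π/2, attains its maximum at φ = β, is symmetric about β (u_β(β+x) = u_β(β−x)), and is decreasing on the interval [β, β + π/4). -/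
open Real

private lemma sinh_strictConvexOn : StrictConvexOn ℝ (Set.Ici (0:ℝ)) Real.sinh := by
  apply strictConvexOn_of_deriv2_pos (convex_Ici 0) Real.continuous_sinh.continuousOn
  intro x hx
  rw [interior_Ici] at hx
  have h2 : deriv^[2] Real.sinh = Real.sinh := by
    ext y
    simp [Function.iterate_succ, Real.deriv_sinh, Real.deriv_cosh]
  rw [h2]
  exact Real.sinh_pos_iff.mpr hx

private lemma sinh_mul_le {x t : ℝ} (hx0 : 0 ≤ x) (hx1 : x ≤ 1) (ht : 0 ≤ t) :
    Real.sinh (x * t) ≤ x * Real.sinh t := by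
  have h := sinh_strictConvexOn.convexOn.2 (Set.self_mem_Ici)
    (Set.mem_Ici.mpr ht) (by linarith : (0:ℝ) ≤ 1 - x) hx0 (by ring)
  simpa [Real.sinh_zero] using h

private lemma sinh_mul_lt {x t : ℝ} (hx0 : 0 < x) (hx1 : x < 1) (ht : 0 < t) :
    Real.sinh (x * t) < x * Real.sinh t := by
  have h := sinh_strictConvexOn.2 (Set.self_mem_Ici)
    (Set.mem_Ici.mpr ht.le) (by exact ht.ne) (by linarith : (0:ℝ) < 1 - x) hx0 (by ring)
  simpa [Real.sinh_zero] using h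

private lemma cosh_bound {x d : ℝ} (hx : |x| ≤ 1) (hd : 0 < d) :
    Real.cosh (d * x) ≤ 1 + x ^ 2 * (Real.cosh d - 1) := by
  have habs : Real.cosh (d * x) = Real.cosh (|x| * (d / 2) * 2) := by
    rw [← Real.cosh_abs (d * x)]
    congr 1
    rw [abs_mul, abs_of_pos hd]
    ring
  have h1 : Real.cosh (|x| * (d / 2) * 2) = 1 + 2 * Real.sinh (|x| * (d / 2)) ^ 2 := by
    rw [mul_comm _ (2:ℝ), Real.cosh_two_mul, Real.cosh_sq]
    ring
  have h2 : Real.cosh d = 1 + 2 * Real.sinh (d / 2) ^ 2 := by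
    have : d = 2 * (d / 2) := by ring
    rw [this, Real.cosh_two_mul, Real.cosh_sq]
    ring
  have key : Real.sinh (|x| * (d / 2)) ≤ |x| * Real.sinh (d / 2) :=
    sinh_mul_le (abs_nonneg x) hx (by linarith)
  have hnn : 0 ≤ Real.sinh (|x| * (d / 2)) :=
    Real.sinh_nonneg_iff.mpr (mul_nonneg (abs_nonneg x) (by linarith))
  have hxsq : |x| ^ 2 = x ^ 2 := sq_abs x
  nlinarith [Real.sinh_nonneg_iff.mpr (le_of_lt (half_pos hd)), sq_abs x, abs_nonneg x]

/-- The von Mises-type function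
u_β(φ) = c e^{d cos(φ−β)} + c e^{−d cos(φ−β)} + c e^{d sin(φ−β)} + c e^{−d sin(φ−β)}
with c, d > 0 is periodic with period π/2, attains its maximum at φ = β,
is symmetric about β, and is decreasing on [β, β + π/4). -/
theorem vonMises_properties (c d β : ℝ) (hc : 0 < c) (hd : 0 < d)
    (hβ : β ∈ Set.Icc 0 (π / 2)) (u : ℝ → ℝ)
    (hu : ∀ φ, u φ = c * exp (d * cos (φ - β)) + c * exp (-(d * cos (φ - β)))
        + c * exp (d * sin (φ - β)) + c * exp (-(d * sin (φ - β)))) :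
    Function.Periodic u (π / 2) ∧
    (∀ φ, u φ ≤ u β) ∧
    (∀ x, u (β + x) = u (β - x)) ∧
    StrictAntiOn u (Set.Ico β (β + π / 4)) := by
  refine ⟨?_, ?_, ?_, ?_⟩
  · -- periodicity
    intro φ
    rw [hu, hu]
    have e : φ + π / 2 - β = (φ - β) + π / 2 := by ring
    rw [e, Real.cos_add_pi_div_two, Real.sin_add_pi_div_two]
    ring_nf
  · -- maximum at β
    intro φ
    rw [hu φ, hu β]
    have hcosh : ∀ y : ℝ, Real.exp y + Real.exp (-y) = 2 * Real.cosh y := by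
      intro y; rw [Real.cosh_eq]; ring
    set t := φ - β with ht
    have b1 : Real.cosh (d * Real.cos t) ≤ 1 + Real.cos t ^ 2 * (Real.cosh d - 1) :=
      cosh_bound (abs_cos_le_one t) hd
    have b2 : Real.cosh (d * Real.sin t) ≤ 1 + Real.sin t ^ 2 * (Real.cosh d - 1) :=
      cosh_bound (abs_sin_le_one t) hd
    have pyth : Real.sin t ^ 2 + Real.cos t ^ 2 = 1 := Real.sin_sq_add_cos_sq t
    have h1 := hcosh (d * Real.cos t)
    have h2 := hcosh (d * Real.sin t)
    have h3 := hcosh d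
    have hch : 1 ≤ Real.cosh d := Real.one_le_cosh d
    simp only [sub_self, Real.cos_zero, Real.sin_zero, mul_one, mul_zero, neg_zero,
      Real.exp_zero]
    have hsum : Real.cosh (d * Real.cos t) + Real.cosh (d * Real.sin t) ≤ 1 + Real.cosh d := by
      nlinarith [b1, b2, pyth, hch]
    nlinarith [mul_le_mul_of_nonneg_left hsum hc.le, h1, h2, h3]
  · -- symmetry
    intro x
    rw [hu, hu]
    have e1 : β + x - β = x := by ring
    have e2 : β - x - β = -x := by ring
    rw [e1, e2, Real.cos_neg, Real.sin_neg]
    ring_nf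
  · -- strict antitonicity
    have hufun : u = fun φ => c * exp (d * cos (φ - β)) + c * exp (-(d * cos (φ - β)))
        + c * exp (d * sin (φ - β)) + c * exp (-(d * sin (φ - β))) := funext hu
    apply strictAntiOn_of_deriv_neg (convex_Ico β (β + π / 4))
    · rw [hufun]
      fun_prop
    · intro φ hφ
      rw [interior_Ico] at hφ
      obtain ⟨h1, h2⟩ := hφ
      set t := φ - β with htdef
      have ht0 : 0 < t := by simp [htdef]; linarith
      have ht4 : t < π / 4 := by simp [htdef]; linarith
      have hpi := Real.pi_pos
      have hs : 0 < Real.sin t := Real.sin_pos_of_pos_of_lt_pi ht0 (by linarith)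
      have hco : 0 < Real.cos t := Real.cos_pos_of_mem_Ioo ⟨by linarith, by linarith⟩
      -- sin t < cos t
      have hsc : Real.sin t < Real.cos t := by
        have hq : 0 < Real.cos (t + π / 4) :=
          Real.cos_pos_of_mem_Ioo ⟨by linarith, by linarith⟩
        rw [Real.cos_add, Real.cos_pi_div_four, Real.sin_pi_div_four] at hq
        have hsqrt : 0 < Real.sqrt 2 := Real.sqrt_pos.mpr (by norm_num)
        nlinarith [hq, hsqrt]
      -- key inequality
      have key : Real.cos t * Real.sinh (d * Real.sin t)
          < Real.sin t * Real.sinh (d * Real.cos t) := by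
        have hx0 : 0 < Real.sin t / Real.cos t := div_pos hs hco
        have hx1 : Real.sin t / Real.cos t < 1 := (div_lt_one hco).mpr hsc
        have htc : 0 < d * Real.cos t := mul_pos hd hco
        have h := sinh_mul_lt hx0 hx1 htc
        have harg : Real.sin t / Real.cos t * (d * Real.cos t) = d * Real.sin t := by
          field_simp
        rw [harg] at h
        have := (mul_lt_mul_iff_right₀ hco).mpr h
        calc Real.cos t * Real.sinh (d * Real.sin t)
            < Real.cos t * (Real.sin t / Real.cos t * Real.sinh (d * Real.cos t)) := this
          _ = Real.sin t * Real.sinh (d * Real.cos t) := by field_simp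
      -- compute the derivative
      have hsub : HasDerivAt (fun x : ℝ => x - β) 1 φ := (hasDerivAt_id φ).sub_const β
      have hcos : HasDerivAt (fun x : ℝ => Real.cos (x - β)) (-Real.sin (φ - β) * 1) φ :=
        hsub.cos
      have hsin : HasDerivAt (fun x : ℝ => Real.sin (x - β)) (Real.cos (φ - β) * 1) φ :=
        hsub.sin
      have T1 := (((hcos.const_mul d).exp).const_mul c)
      have T2 := ((((hcos.const_mul d).neg).exp).const_mul c)
      have T3 := (((hsin.const_mul d).exp).const_mul c)
      have T4 := ((((hsin.const_mul d).neg).exp).const_mul c)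
      have hD := ((T1.add T2).add T3).add T4
      have hderiv : HasDerivAt u
          (c * (Real.exp (d * Real.cos (φ - β)) * (d * (-Real.sin (φ - β) * 1)))
          + c * (Real.exp (-(d * Real.cos (φ - β))) * -(d * (-Real.sin (φ - β) * 1)))
          + c * (Real.exp (d * Real.sin (φ - β)) * (d * (Real.cos (φ - β) * 1)))
          + c * (Real.exp (-(d * Real.sin (φ - β))) * -(d * (Real.cos (φ - β) * 1)))) φ := by
        rw [hufun]
        exact hD
      rw [hderiv.deriv]
      have final : c * (Real.exp (d * Real.cos (φ - β)) * (d * (-Real.sin (φ - β) * 1)))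
          + c * (Real.exp (-(d * Real.cos (φ - β))) * -(d * (-Real.sin (φ - β) * 1)))
          + c * (Real.exp (d * Real.sin (φ - β)) * (d * (Real.cos (φ - β) * 1)))
          + c * (Real.exp (-(d * Real.sin (φ - β))) * -(d * (Real.cos (φ - β) * 1)))
          = 2 * (c * d) * (Real.cos (φ - β) * Real.sinh (d * Real.sin (φ - β))
            - Real.sin (φ - β) * Real.sinh (d * Real.cos (φ - β))) := by
        rw [Real.sinh_eq (d * Real.cos (φ - β)), Real.sinh_eq (d * Real.sin (φ - β))]
        ring
      rw [final]
      have hneg : Real.cos (φ - β) * Real.sinh (d * Real.sin (φ - β))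
          - Real.sin (φ - β) * Real.sinh (d * Real.cos (φ - β)) < 0 := by
        have := key; simp only [htdef] at this ⊢; linarith
      have hcd : 0 < c * d := mul_pos hc hd
      nlinarith [hneg, hcd]
end

section
/- Let 0 < p < 2, n ≥ 3, and θ a sequence, and let τ_{k,i} = 2j for m_{k+j−1}+1 ≤ i ≤ m_{k+j} (with m_{k+j} = 2^j m_k). If on each block Σ_{i=m_{k+j−1}+1}^{m_{k+j}} |θ_i|^p ≤ M^p 2^{ps} 2^{−jps} m_k^{−ps} for some s > 0 with Σ_{j≥1} j^{1−p/2} 2^{−jps} < ∞, then Σ_{i=m_k+1}^{m_J} min(2τ_{k,i}/n, θ_i²) ≤ C m_k^{−ps} n^{p/2 − 1} for a constant C depending only on p, s, M. -/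
lemma min_le_rpow_mul (p a b : ℝ) (hp : 0 < p) (hp2 : p < 2) (ha : 0 < a) (hb : 0 ≤ b) :
    min a b ≤ a ^ (1 - p / 2) * b ^ (p / 2) := by
  rcases eq_or_lt_of_le hb with hb0 | hb0
  · simp [← hb0, min_def, Real.zero_rpow (by positivity : p / 2 ≠ 0), ha.le]
  · have hmin : 0 < min a b := lt_min ha hb0
    have h1 : min a b = (min a b) ^ (1 - p / 2) * (min a b) ^ (p / 2) := by
      rw [← Real.rpow_add hmin]; norm_num
    rw [h1]
    apply mul_le_mul
    · exact Real.rpow_le_rpow hmin.le (min_le_left _ _) (by linarith)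
    · exact Real.rpow_le_rpow hmin.le (min_le_right _ _) (by positivity)
    · positivity
    · positivity

/-- Let 0 < p < 2, s > 0, M > 0, and consider dyadic blocks m_{k+j} = 2^j m_k with
thresholds τ_{k,i} = 2j on the j-th block. If on each block
Σ_{i=m_{k+j-1}+1}^{m_{k+j}} |θ_i|^p ≤ M^p 2^{ps} 2^{−jps} m_k^{−ps}, then
Σ_{i=m_k+1}^{m_J} min(2τ_{k,i}/n, θ_i²) ≤ C m_k^{−ps} n^{p/2−1}
for a constant C depending only on p, s, M. -/
theorem thresholded_block_sum_bound (p s M : ℝ) (hp : 0 < p) (hp2 : p < 2)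
    (hs : 0 < s) (hM : 0 < M)
    (hgeom : Summable (fun j : ℕ => ((j : ℝ) + 1) ^ (1 - p / 2)
        * 2 ^ (-((j : ℝ) + 1) * p * s))) :
    ∃ C > 0, ∀ (n : ℝ), 3 ≤ n → ∀ (mk : ℕ), 1 ≤ mk → ∀ (J k : ℕ), k < J →
      ∀ θ : ℕ → ℝ,
        (∀ j : ℕ, 1 ≤ j → j ≤ J - k →
          ∑ i ∈ Finset.Ioc (2 ^ (j - 1) * mk) (2 ^ j * mk), |θ i| ^ p
            ≤ M ^ p * 2 ^ (p * s) * 2 ^ (-(j : ℝ) * p * s) * (mk : ℝ) ^ (-(p * s))) →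
        ∑ j ∈ Finset.Icc 1 (J - k),
            ∑ i ∈ Finset.Ioc (2 ^ (j - 1) * mk) (2 ^ j * mk),
              min (2 * (2 * (j : ℝ)) / n) ((θ i) ^ 2)
          ≤ C * (mk : ℝ) ^ (-(p * s)) * n ^ (p / 2 - 1) := by
  set T : ℝ := ∑' j : ℕ, ((j : ℝ) + 1) ^ (1 - p / 2) * 2 ^ (-((j : ℝ) + 1) * p * s) with hTdef
  have hT0 : 0 ≤ T := tsum_nonneg fun j => by positivity
  refine ⟨(4 : ℝ) ^ (1 - p / 2) * M ^ p * 2 ^ (p * s) * (T + 1), by positivity, ?_⟩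
  intro n hn mk hmk J k hkJ θ hθ
  have hn0 : (0 : ℝ) < n := by linarith
  set N := J - k with hN
  -- per-block bound
  have hblock : ∀ j ∈ Finset.Icc 1 N,
      ∑ i ∈ Finset.Ioc (2 ^ (j - 1) * mk) (2 ^ j * mk),
          min (2 * (2 * (j : ℝ)) / n) ((θ i) ^ 2)
        ≤ (4 : ℝ) ^ (1 - p / 2) * ((j : ℝ) ^ (1 - p / 2) * 2 ^ (-(j : ℝ) * p * s))
            * (M ^ p * 2 ^ (p * s)) * (mk : ℝ) ^ (-(p * s)) * n ^ (p / 2 - 1) := by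
    intro j hj
    simp only [Finset.mem_Icc] at hj
    have hj1 : (1 : ℝ) ≤ (j : ℝ) := by exact_mod_cast hj.1
    have ha : (0 : ℝ) < 2 * (2 * (j : ℝ)) / n := by positivity
    have step1 : ∑ i ∈ Finset.Ioc (2 ^ (j - 1) * mk) (2 ^ j * mk),
        min (2 * (2 * (j : ℝ)) / n) ((θ i) ^ 2)
        ≤ (2 * (2 * (j : ℝ)) / n) ^ (1 - p / 2) *
          ∑ i ∈ Finset.Ioc (2 ^ (j - 1) * mk) (2 ^ j * mk), |θ i| ^ p := by
      rw [Finset.mul_sum]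
      apply Finset.sum_le_sum
      intro i _
      have := min_le_rpow_mul p (2 * (2 * (j : ℝ)) / n) ((θ i) ^ 2) hp hp2 ha (by positivity)
      have heq : ((θ i) ^ 2 : ℝ) ^ (p / 2) = |θ i| ^ p := by
        rw [← sq_abs, ← Real.rpow_natCast |θ i| 2, ← Real.rpow_mul (abs_nonneg _)]
        ring_nf
      rwa [heq] at this
    have hfac : (2 * (2 * (j : ℝ)) / n) ^ (1 - p / 2)
        = (4 : ℝ) ^ (1 - p / 2) * (j : ℝ) ^ (1 - p / 2) * n ^ (p / 2 - 1) := by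
      rw [Real.div_rpow (by positivity) hn0.le]
      have h4 : 2 * (2 * (j : ℝ)) = 4 * (j : ℝ) := by ring
      rw [h4, Real.mul_rpow (by norm_num) (by positivity), div_eq_mul_inv,
        ← Real.rpow_neg hn0.le]
      ring_nf
    calc ∑ i ∈ Finset.Ioc (2 ^ (j - 1) * mk) (2 ^ j * mk),
          min (2 * (2 * (j : ℝ)) / n) ((θ i) ^ 2)
        ≤ (2 * (2 * (j : ℝ)) / n) ^ (1 - p / 2) *
          ∑ i ∈ Finset.Ioc (2 ^ (j - 1) * mk) (2 ^ j * mk), |θ i| ^ p := step1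
      _ ≤ (2 * (2 * (j : ℝ)) / n) ^ (1 - p / 2) *
          (M ^ p * 2 ^ (p * s) * 2 ^ (-(j : ℝ) * p * s) * (mk : ℝ) ^ (-(p * s))) := by
          exact mul_le_mul_of_nonneg_left (hθ j hj.1 hj.2) (by positivity)
      _ = (4 : ℝ) ^ (1 - p / 2) * ((j : ℝ) ^ (1 - p / 2) * 2 ^ (-(j : ℝ) * p * s))
            * (M ^ p * 2 ^ (p * s)) * (mk : ℝ) ^ (-(p * s)) * n ^ (p / 2 - 1) := by
          rw [hfac]; ring
  have hsum := Finset.sum_le_sum hblock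
  refine hsum.trans ?_
  rw [← Finset.sum_mul, ← Finset.sum_mul, ← Finset.sum_mul, ← Finset.mul_sum]
  -- now bound ∑_{j ∈ Icc 1 N} j^(1-p/2) * 2^(-j p s) ≤ T ≤ T + 1
  have hsum2 : ∑ j ∈ Finset.Icc 1 N, (j : ℝ) ^ (1 - p / 2) * 2 ^ (-(j : ℝ) * p * s)
      ≤ T + 1 := by
    have hre : ∑ j ∈ Finset.Icc 1 N, (j : ℝ) ^ (1 - p / 2) * 2 ^ (-(j : ℝ) * p * s)
        = ∑ j ∈ Finset.range N, ((j : ℝ) + 1) ^ (1 - p / 2) * 2 ^ (-((j : ℝ) + 1) * p * s) := by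
      rw [show Finset.Icc 1 N = Finset.Ico 1 (N + 1) from by ext x; simp [Nat.lt_succ_iff],
        Finset.sum_Ico_eq_sum_range]
      apply Finset.sum_congr (by norm_num)
      intro i _
      push_cast
      rw [add_comm (1 : ℝ) (i : ℝ)]
    rw [hre]
    have := Summable.sum_le_tsum (Finset.range N) (fun j _ => by positivity) hgeom
    linarith
  calc (4 : ℝ) ^ (1 - p / 2) *
        (∑ j ∈ Finset.Icc 1 N, (j : ℝ) ^ (1 - p / 2) * 2 ^ (-(j : ℝ) * p * s))
        * (M ^ p * 2 ^ (p * s)) * (mk : ℝ) ^ (-(p * s)) * n ^ (p / 2 - 1)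
      ≤ (4 : ℝ) ^ (1 - p / 2) * (T + 1) * (M ^ p * 2 ^ (p * s)) * (mk : ℝ) ^ (-(p * s))
          * n ^ (p / 2 - 1) := by
        have hnn : (0:ℝ) ≤ (mk : ℝ) ^ (-(p * s)) * n ^ (p / 2 - 1) := by positivity
        have h4 : (0:ℝ) < (4 : ℝ) ^ (1 - p / 2) := by positivity
        have hMp : (0:ℝ) < M ^ p * 2 ^ (p * s) := by positivity
        calc (4 : ℝ) ^ (1 - p / 2) *
              (∑ j ∈ Finset.Icc 1 N, (j : ℝ) ^ (1 - p / 2) * 2 ^ (-(j : ℝ) * p * s))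
              * (M ^ p * 2 ^ (p * s)) * (mk : ℝ) ^ (-(p * s)) * n ^ (p / 2 - 1)
            = ((4 : ℝ) ^ (1 - p / 2) * (M ^ p * 2 ^ (p * s)) * ((mk : ℝ) ^ (-(p * s)) * n ^ (p / 2 - 1))) *
              (∑ j ∈ Finset.Icc 1 N, (j : ℝ) ^ (1 - p / 2) * 2 ^ (-(j : ℝ) * p * s)) := by ring
          _ ≤ ((4 : ℝ) ^ (1 - p / 2) * (M ^ p * 2 ^ (p * s)) * ((mk : ℝ) ^ (-(p * s)) * n ^ (p / 2 - 1))) * (T + 1) := by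
              exact mul_le_mul_of_nonneg_left hsum2 (by positivity)
          _ = (4 : ℝ) ^ (1 - p / 2) * (T + 1) * (M ^ p * 2 ^ (p * s)) * (mk : ℝ) ^ (-(p * s)) * n ^ (p / 2 - 1) := by ring
    _ = (4 : ℝ) ^ (1 - p / 2) * M ^ p * 2 ^ (p * s) * (T + 1) * (mk : ℝ) ^ (-(p * s)) * n ^ (p / 2 - 1) := by ring
end

section
/- Let J have the hypergeometric distribution P(J = j) = C(k,j) C(m−k, k−j)/C(m,k) for 0 ≤ j ≤ k, where k = √(b m log m) ≤ m/2 and b > 0. Then E[e^J] ≤ (1 + (e−1) k/m)^k (1 − k/m)^{−k} ≤ m^{be}, using (1 − k/m)^{−k} ≤ e^{k²/m} and (1 + (e−1)k/m)^k ≤ e^{(e−1)k²/m}. -/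
/-!
Since `C(m - k, k - j) / C(m, k) ≤ (k / (m - k)) ^ j`, the weights of `J` are dominated termwise
by those of a binomial expansion, and the binomial theorem gives
`E[e ^ J] ≤ (1 + e k / (m - k)) ^ k = (1 + (e - 1) k / m) ^ k (1 - k / m) ^ (-k)`.
For `x = k / m ≤ 1 / 2` the elementary inequality `1 + (e - 1) x ≤ (1 - x) e ^ (e x)`,
a degree-four Taylor estimate, bounds this by `e ^ (e k² / m) = m ^ (b e)`.
-/

open Real Finset

theorem choose_sub_mul_pow_le_pow_mul_choose_add (n k j : ℕ) (hj : j ≤ k) :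
    n.choose (k - j) * n ^ j ≤ k ^ j * (n + k).choose k := by
  have hswap :
      (n + j).choose k * k.descFactorial j = (n + j).descFactorial j * n.choose (k - j) := by
    have := Nat.choose_mul (n := n + j) hj
    rw [Nat.add_sub_cancel] at this
    rw [Nat.descFactorial_eq_factorial_mul_choose, Nat.descFactorial_eq_factorial_mul_choose]
    grind
  refine Nat.le_of_mul_le_mul_left ?_ (Nat.descFactorial_pos.mpr (Nat.le_add_left j n))
  calc (n + j).descFactorial j * (n.choose (k - j) * n ^ j)
      = (n + j).choose k * k.descFactorial j * n ^ j := by rw [hswap, mul_assoc]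
    _ ≤ (n + k).choose k * k ^ j * (n + j).descFactorial j := by
      gcongr ?_ * ?_ * ?_
      · exact Nat.choose_le_choose k (by omega)
      · exact Nat.descFactorial_le_pow k j
      · calc n ^ j ≤ (n + j + 1 - j) ^ j := Nat.pow_le_pow_left (by omega) j
          _ ≤ (n + j).descFactorial j := Nat.pow_sub_le_descFactorial (n + j) j
    _ = (n + j).descFactorial j * (k ^ j * (n + k).choose k) := by ring

lemma choose_sub_div_choose_add_le (n k j : ℕ) (hn : 0 < n) (hj : j ≤ k) :
    (n.choose (k - j) : ℝ) / (n + k).choose k ≤ (k / n) ^ j := by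
  have hchoose : (0 : ℝ) < (n + k).choose k := by exact_mod_cast Nat.choose_pos (by omega)
  rw [div_pow, div_le_div_iff₀ hchoose (by positivity)]
  exact_mod_cast choose_sub_mul_pow_le_pow_mul_choose_add n k j hj

lemma sum_choose_mul_choose_div_choose_mul_pow_le (n k : ℕ) (hn : 0 < n) {r : ℝ}
    (hr : 0 ≤ r) :
    ∑ j ∈ range (k + 1), (k.choose j * n.choose (k - j) : ℝ) / (n + k).choose k * r ^ j
      ≤ (r * k / n + 1) ^ k := by
  rw [add_pow]
  refine sum_le_sum fun j hj ↦ ?_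
  calc (k.choose j * n.choose (k - j) : ℝ) / (n + k).choose k * r ^ j
      = k.choose j * ((n.choose (k - j) : ℝ) / (n + k).choose k) * r ^ j := by
        rw [mul_div_assoc]
    _ ≤ k.choose j * (k / n) ^ j * r ^ j := by
      gcongr
      exact choose_sub_div_choose_add_le n k j hn (Nat.lt_succ_iff.mp (mem_range.mp hj))
    _ = (r * k / n) ^ j * 1 ^ (k - j) * k.choose j := by ring

lemma one_add_exp_one_sub_one_mul_le {x : ℝ} (hx0 : 0 ≤ x) (hx : x ≤ 1 / 2) :
    1 + (exp 1 - 1) * x ≤ (1 - x) * exp (exp 1 * x) := by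
  have hE : 2.7 < exp 1 := lt_trans (by norm_num) exp_one_gt_d9
  have hE' : exp 1 < 3 := lt_trans exp_one_lt_d9 (by norm_num)
  set E := exp 1
  have htaylor := sum_le_exp_of_nonneg (mul_nonneg (by positivity) hx0 : 0 ≤ E * x) 5
  norm_num [sum_range_succ, Nat.factorial] at htaylor
  -- `(1 - x) T₄(E x) - 1 - (E - 1) x = x² Q(x)`, where `Q` is decreasing and `Q(1/2) > 0`.
  have hQ : 0 ≤ E * (E - 2) / 2 - E ^ 2 * (3 - E) / 6 * x - E ^ 3 * (4 - E) / 24 * x ^ 2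
      - E ^ 4 / 24 * x ^ 3 := by
    have hx2 : x ^ 2 ≤ 1 / 4 := by nlinarith
    have hx3 : x ^ 3 ≤ 1 / 8 := by nlinarith
    have h1 : E ^ 2 * (3 - E) / 6 * x ≤ E ^ 2 * (3 - E) / 6 * (1 / 2) := by gcongr
    have h2 : E ^ 3 * (4 - E) / 24 * x ^ 2 ≤ E ^ 3 * (4 - E) / 24 * (1 / 4) :=
      mul_le_mul_of_nonneg_left hx2
        (div_nonneg (mul_nonneg (by positivity) (by linarith)) (by norm_num))
    have h3 : E ^ 4 / 24 * x ^ 3 ≤ E ^ 4 / 24 * (1 / 8) := by gcongr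
    have hhalf : 0 < -E + E ^ 2 / 4 + E ^ 3 / 24 + E ^ 4 / 192 := by
      have hE3 : 2.7 ^ 3 ≤ E ^ 3 := by gcongr
      have hE4 : 2.7 ^ 4 ≤ E ^ 4 := by gcongr
      nlinarith
    nlinarith
  calc 1 + (E - 1) * x
      ≤ (1 - x) * (1 + E * x + (E * x) ^ 2 / 2 + (E * x) ^ 3 / 6 + (E * x) ^ 4 / 24) := by
        nlinarith [mul_nonneg (sq_nonneg x) hQ]
    _ ≤ (1 - x) * exp (E * x) := by gcongr; linarith

lemma one_add_exp_one_sub_one_mul_pow_mul_one_sub_zpow_le {x : ℝ} (hx0 : 0 ≤ x)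
    (hx : x ≤ 1 / 2) (k : ℕ) :
    (1 + (exp 1 - 1) * x) ^ k * (1 - x) ^ (-(k : ℤ)) ≤ exp (exp 1 * x * k) := by
  have hpos : 0 < 1 - x := by linarith
  calc (1 + (exp 1 - 1) * x) ^ k * (1 - x) ^ (-(k : ℤ))
      = ((1 + (exp 1 - 1) * x) / (1 - x)) ^ k := by
        rw [zpow_neg, zpow_natCast, div_pow, div_eq_mul_inv]
    _ ≤ exp (exp 1 * x) ^ k := by
      gcongr
      · exact div_nonneg (by nlinarith [add_one_le_exp 1]) hpos.le
      · rw [div_le_iff₀ hpos]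
        linarith [one_add_exp_one_sub_one_mul_le hx0 hx]
    _ = exp (exp 1 * x * k) := by rw [← exp_nat_mul, mul_comm]

theorem hypergeometric_exp_moment_bound_general (m k : ℕ) (b : ℝ)
    (hk : 0 < k) (hkm : 2 * k ≤ m)
    (hkdef : (k : ℝ) = Real.sqrt (b * m * Real.log m)) :
    (∑ j ∈ Finset.range (k + 1),
        ((Nat.choose k j * Nat.choose (m - k) (k - j) : ℝ) / Nat.choose m k)
          * Real.exp j)
      ≤ (1 + (Real.exp 1 - 1) * k / m) ^ k * (1 - (k : ℝ) / m) ^ (-(k : ℤ)) ∧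
    (1 + (Real.exp 1 - 1) * k / m) ^ k * (1 - (k : ℝ) / m) ^ (-(k : ℤ))
      ≤ (m : ℝ) ^ (b * Real.exp 1) := by
  obtain ⟨n, rfl⟩ : ∃ n, m = n + k := ⟨m - k, by omega⟩
  have hn : 0 < n := by omega
  simp only [Nat.add_sub_cancel] at hkdef ⊢
  push_cast at hkdef ⊢
  have hx : (k : ℝ) / (n + k) ≤ 1 / 2 := by
    have h2k : (2 * k : ℝ) ≤ n + k := by exact_mod_cast hkm
    rw [div_le_iff₀ (by positivity)]
    linarith
  have hsq : (k : ℝ) ^ 2 = b * (n + k) * log (n + k) := by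
    have harg : 0 < b * (n + k) * log (n + k) := sqrt_pos.mp (hkdef ▸ by exact_mod_cast hk)
    rw [← sq_sqrt harg.le, ← hkdef]
  constructor
  · have hsum := sum_choose_mul_choose_div_choose_mul_pow_le n k hn (exp_pos 1).le
    simp only [← exp_nat_mul, mul_one] at hsum
    refine hsum.trans_eq ?_
    rw [zpow_neg, zpow_natCast, ← div_eq_mul_inv, ← div_pow]
    field_simp
    ring
  · rw [mul_div_assoc]
    refine (one_add_exp_one_sub_one_mul_pow_mul_one_sub_zpow_le (by positivity) hx k).trans_eq ?_
    rw [rpow_def_of_pos (by positivity)]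
    congr 1
    calc exp 1 * (k / (n + k)) * k = exp 1 * (k ^ 2 / (n + k)) := by ring
      _ = log (n + k) * (b * exp 1) := by rw [hsq]; field_simp

/-- Let J have the hypergeometric distribution
P(J = j) = C(k,j) C(m−k,k−j)/C(m,k) for 0 ≤ j ≤ k, where k = √(b m log m) ≤ m/2
and b > 0. Then E[e^J] ≤ (1 + (e−1)k/m)^k (1 − k/m)^{−k} ≤ m^{be}. -/
theorem hypergeometric_exp_moment_bound (m k : ℕ) (b : ℝ) (hb : 0 < b)
    (hk : 0 < k) (hkm : 2 * k ≤ m)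
    (hkdef : (k : ℝ) = Real.sqrt (b * m * Real.log m)) :
    (∑ j ∈ Finset.range (k + 1),
        ((Nat.choose k j * Nat.choose (m - k) (k - j) : ℝ) / Nat.choose m k)
          * Real.exp j)
      ≤ (1 + (Real.exp 1 - 1) * k / m) ^ k * (1 - (k : ℝ) / m) ^ (-(k : ℤ)) ∧
    (1 + (Real.exp 1 - 1) * k / m) ^ k * (1 - (k : ℝ) / m) ^ (-(k : ℤ))
      ≤ (m : ℝ) ^ (b * Real.exp 1) :=
  hypergeometric_exp_moment_bound_general m k b hk hkm hkdef
end

section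
/- For real numbers ξ̂_1,…,ξ̂_J, penalties ω_1,…,ω_J, and target ξ, the estimator ξ̂ = max_{1≤k≤J} (ξ̂_k − ω_k) satisfies (ξ̂ − ξ)² ≤ min_{1≤k≤J} (ξ̂_k − ω_k − ξ)² + Σ_{k=1}^J ((ξ̂_k − ω_k − ξ)_+)². -/
open Finset

section

variable {ι : Type*} {s : Finset ι} (hs : s.Nonempty) (f : ι → ℝ) (c : ℝ)

theorem sq_sup'_sub_le_inf'_of_sup'_le (h : s.sup' hs f ≤ c) :
    (s.sup' hs f - c) ^ 2 ≤ s.inf' hs (fun k => (f k - c) ^ 2) :=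
  le_inf' _ _ fun k hk => by
    have hfk : f k ≤ s.sup' hs f := le_sup' f hk
    nlinarith

theorem sq_sup'_sub_le_sum_sq_max_of_le_sup' (h : c ≤ s.sup' hs f) :
    (s.sup' hs f - c) ^ 2 ≤ ∑ k ∈ s, max (f k - c) 0 ^ 2 := by
  obtain ⟨j, hj, hj_max⟩ := exists_mem_eq_sup' hs f
  calc (s.sup' hs f - c) ^ 2 = max (f j - c) 0 ^ 2 := by
        rw [hj_max, max_eq_left (by linarith)]
    _ ≤ ∑ k ∈ s, max (f k - c) 0 ^ 2 :=
        single_le_sum (f := fun k => max (f k - c) 0 ^ 2) (fun k _ => by positivity) hj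

theorem sq_sup'_sub_le_inf'_add_sum_sq_max :
    (s.sup' hs f - c) ^ 2
      ≤ s.inf' hs (fun k => (f k - c) ^ 2) + ∑ k ∈ s, max (f k - c) 0 ^ 2 := by
  rcases le_total (s.sup' hs f) c with h | h
  · have hsum : 0 ≤ ∑ k ∈ s, max (f k - c) 0 ^ 2 := sum_nonneg fun k _ => by positivity
    linarith [sq_sup'_sub_le_inf'_of_sup'_le hs f c h]
  · have hinf : 0 ≤ s.inf' hs (fun k => (f k - c) ^ 2) := le_inf' _ _ fun k _ => by positivity
    linarith [sq_sup'_sub_le_sum_sq_max_of_le_sup' hs f c h]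

end

/-- For real numbers ξ̂_1,…,ξ̂_J, penalties ω_1,…,ω_J, and target ξ, the
estimator ξ̂ = max_{1≤k≤J} (ξ̂_k − ω_k) satisfies
(ξ̂ − ξ)² ≤ min_{1≤k≤J} (ξ̂_k − ω_k − ξ)² + Σ_{k=1}^J ((ξ̂_k − ω_k − ξ)_+)². -/
theorem penalized_max_risk_bound (J : ℕ) (hJ : 0 < J)
    (xihat ω : Fin J → ℝ) (ξ : ℝ) :
    haveI : Nonempty (Fin J) := Fin.pos_iff_nonempty.mp hJ
    ((Finset.univ.sup' Finset.univ_nonempty (fun k => xihat k - ω k)) - ξ) ^ 2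
      ≤ (Finset.univ.inf' Finset.univ_nonempty
            (fun k => (xihat k - ω k - ξ) ^ 2))
        + ∑ k, (max (xihat k - ω k - ξ) 0) ^ 2 :=
  sq_sup'_sub_le_inf'_add_sum_sq_max _ (fun k => xihat k - ω k) ξ
end
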